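/- arXiv:1405.2002 — 3 statements merged into one kernel-verified Lean document; each statement's English description precedes it below -/
import Mathlib

section
/- The Jacobi theta function satisfies Jacobi's triple product formula: θ(z) = ∏_{m=1}^∞ (1 − e^{2iπτm})(1 − e^{2iπ((m−1)τ+z)})(1 − e^{2iπ(mτ−z)}), where the infinite product converges for all z ∈ C and Im(τ) > 0. -/
open Finset Filter Topology

namespace JTP

/-- triangular numbers: Tn k = k(k-1)/2 -/
def Tn : ℕ → ℕ
  | 0 => 0
  | (k+1) => Tn k + k

lemma two_Tn (k : ℕ) : (2 * Tn k : ℤ) = k * (k - 1) := by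
  induction k with
  | zero => rfl
  | succ k ih =>
    show (2 * (Tn k + k) : ℤ) = _
    push_cast at ih ⊢
    linear_combination ih

/-- recursive Gauss binomial coefficient (in variable w) -/
noncomputable def G (w : ℂ) : ℕ → ℕ → ℂ
  | 0, 0 => 1
  | 0, (_+1) => 0
  | (_+1), 0 => 1
  | (N+1), (k+1) => G w N (k+1) + w ^ (N - k) * G w N k

lemma G_zero (w : ℂ) (N : ℕ) : G w N 0 = 1 := by cases N <;> rfl

lemma G_eq_zero (w : ℂ) : ∀ N k, N < k → G w N k = 0 := by
  intro N
  induction N with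
  | zero => intro k hk; cases k with
    | zero => omega
    | succ m => rfl
  | succ N ih =>
    intro k hk
    cases k with
    | zero => omega
    | succ m =>
      show G w N (m+1) + w ^ (N - m) * G w N m = 0
      rw [ih (m+1) (by omega), ih m (by omega)]
      ring

/-- Gauss binomial theorem -/
lemma gauss (w x : ℂ) : ∀ N : ℕ, ∏ j ∈ range N, (1 + x * w ^ j)
    = ∑ k ∈ range (N+1), G w N k * w ^ (Tn k) * x ^ k := by
  intro N
  induction N with
  | zero => simp [G, Tn]
  | succ N ih =>
    rw [prod_range_succ, ih]
    have key : ∑ k ∈ range (N+2), G w (N+1) k * w ^ (Tn k) * x ^ k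
        = (∑ k ∈ range (N+2), G w N k * w ^ (Tn k) * x ^ k)
          + ∑ k ∈ range (N+2),
            (if h : k = 0 then 0 else w ^ (N - (k-1)) * G w N (k-1) * w ^ (Tn k) * x ^ k) := by
      rw [← Finset.sum_add_distrib]
      refine Finset.sum_congr rfl fun k _ => ?_
      cases k with
      | zero => simp [G_zero]
      | succ m =>
        simp only [Nat.succ_ne_zero, dif_neg, not_false_iff, Nat.add_sub_cancel]
        rw [show G w (N+1) (m+1) = G w N (m+1) + w ^ (N - m) * G w N m from rfl]
        ring
    rw [key]
    have h1 : ∑ k ∈ range (N+2), G w N k * w ^ (Tn k) * x ^ k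
        = ∑ k ∈ range (N+1), G w N k * w ^ (Tn k) * x ^ k := by
      rw [Finset.sum_range_succ, G_eq_zero w N (N+1) (by omega)]
      simp
    have h2 : ∑ k ∈ range (N+2),
          (if h : k = 0 then 0 else w ^ (N - (k-1)) * G w N (k-1) * w ^ (Tn k) * x ^ k)
        = ∑ k ∈ range (N+1), G w N k * w ^ (Tn k) * x ^ k * (x * w ^ N) := by
      rw [Finset.sum_range_succ']
      simp only [dif_pos, add_zero]
      refine Finset.sum_congr rfl fun k hk => ?_
      have hk' : k ≤ N := by simpa [Nat.lt_succ_iff] using hk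
      simp only [Nat.succ_ne_zero, dif_neg, not_false_iff, Nat.add_sub_cancel]
      have hE : (N - k) + (Tn k + k) = Tn k + N := by omega
      rw [show Tn (k+1) = Tn k + k from rfl]
      calc w ^ (N - k) * G w N k * w ^ (Tn k + k) * x ^ (k+1)
          = G w N k * w ^ ((N - k) + (Tn k + k)) * x ^ (k+1) := by
            rw [pow_add w (N-k) (Tn k + k)]; ring
        _ = G w N k * w ^ (Tn k) * x ^ k * (x * w ^ N) := by
            rw [hE, pow_add]; ring
    rw [h1, h2, mul_add, mul_one, Finset.sum_mul]

/-- partial products of (1 - w^{j+1}) -/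
noncomputable def D (w : ℂ) (k : ℕ) : ℂ := ∏ j ∈ range k, (1 - w ^ (j+1))

/-- closed form: G(N,k) * D(k) = ∏_{j<k} (1 - w^{N-k+j+1}) for k ≤ N -/
lemma G_mul_D (w : ℂ) : ∀ N k, k ≤ N →
    G w N k * D w k = ∏ j ∈ range k, (1 - w ^ (N - k + j + 1)) := by
  intro N
  induction N with
  | zero => intro k hk; interval_cases k; simp [G, D]
  | succ N ih =>
    intro k hk
    cases k with
    | zero => simp [G_zero, D]
    | succ k =>
      have hkN : k ≤ N := by omega
      show (G w N (k+1) + w ^ (N - k) * G w N k) * D w (k+1) = _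
      rcases Nat.lt_or_ge k N with hlt | hge
      · -- k + 1 ≤ N
        have hk1 : k + 1 ≤ N := hlt
        have e1 : G w N (k+1) * D w (k+1) = ∏ j ∈ range (k+1), (1 - w ^ (N - (k+1) + j + 1)) :=
          ih (k+1) hk1
        have e2 : G w N k * D w k = ∏ j ∈ range k, (1 - w ^ (N - k + j + 1)) := ih k hkN
        have hD : D w (k+1) = D w k * (1 - w ^ (k+1)) := by
          rw [D, D, prod_range_succ]
        set Q : ℂ := ∏ j ∈ range k, (1 - w ^ (N - k + j + 1)) with hQ
        have e1' : G w N (k+1) * D w (k+1) = Q * (1 - w ^ (N - k)) := by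
          rw [e1, prod_range_succ']
          congr 1
          · refine Finset.prod_congr rfl fun j _ => ?_
            congr 2
            omega
          · congr 2; omega
        have target : ∏ j ∈ range (k+1), (1 - w ^ (N + 1 - (k+1) + j + 1))
            = Q * (1 - w ^ (N + 1)) := by
          rw [prod_range_succ]
          congr 1
          · refine Finset.prod_congr rfl fun j _ => ?_
            congr 2
            omega
          · congr 2; omega
        have expand : (G w N (k+1) + w ^ (N - k) * G w N k) * D w (k+1)
            = G w N (k+1) * D w (k+1) + w ^ (N - k) * (G w N k * D w k) * (1 - w ^ (k+1)) := by
          rw [hD]; ring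
        rw [expand, e1', e2, target]
        have hw : w ^ (N - k) * w ^ (k + 1) = w ^ (N + 1) := by
          rw [← pow_add]; congr 1; omega
        linear_combination (-Q) * hw
      · -- k = N
        have hkeq : k = N := by omega
        subst hkeq
        rw [G_eq_zero w k (k+1) (by omega)]
        have e2 : G w k k * D w k = ∏ j ∈ range k, (1 - w ^ (k - k + j + 1)) := ih k le_rfl
        simp only [Nat.sub_self, zero_add] at e2
        have hGk : G w k k * D w k = D w k := by
          rw [e2]; rfl
        have hD : D w (k+1) = D w k * (1 - w ^ (k+1)) := by rw [D, D, prod_range_succ]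
        rw [zero_add, Nat.sub_self, pow_zero, one_mul, hD, ← mul_assoc, hGk]
        have hR : ∏ j ∈ range (k+1), (1 - w ^ (k + 1 - (k+1) + j + 1))
            = ∏ j ∈ range (k+1), (1 - w ^ (j + 1)) :=
          Finset.prod_congr rfl fun j _ => by congr 2; omega
        rw [hR, show (∏ j ∈ range (k+1), (1 - w ^ (j+1))) = D w (k+1) from rfl, hD]


/-- exponent n(n-1)/2 as a natural number -/
def t (n : ℤ) : ℕ := (n * (n-1) / 2).toNat

lemma two_t (n : ℤ) : (2 * t n : ℤ) = n * (n - 1) := by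
  have heven : (2:ℤ) ∣ n * (n - 1) := by
    have := Int.even_mul_succ_self (n - 1)
    rw [show n - 1 + 1 = n from by ring] at this
    rcases this with ⟨c, hc⟩
    exact ⟨c, by linarith [hc]⟩
  have hnn : 0 ≤ n * (n - 1) := by
    rcases le_or_gt n 0 with h | h
    · exact mul_nonneg_iff.mpr (Or.inr ⟨h, by omega⟩)
    · exact mul_nonneg (by omega) (by omega)
  have h1 : (t n : ℤ) = n * (n - 1) / 2 :=
    Int.toNat_of_nonneg (Int.ediv_nonneg hnn (by norm_num))
  rw [h1]
  exact Int.mul_ediv_cancel' heven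

/-- the general term of the theta series -/
noncomputable def b (w x : ℂ) (n : ℤ) : ℂ := (-1:ℂ) ^ n * w ^ (t n) * x ^ n

lemma Tn_sum (N : ℕ) : Tn N = ∑ j ∈ range N, j := by
  induction N with
  | zero => rfl
  | succ N ih => rw [sum_range_succ, ← ih]; rfl

lemma triple_finite (w x : ℂ) (hw0 : w ≠ 0) (hx : x ≠ 0) (N : ℕ) :
    (∏ j ∈ range N, (1 - x * w ^ j)) * ∏ j ∈ range N, (1 - w ^ (j+1) * x⁻¹)
    = ∑ k ∈ range (2*N+1), G w (2*N) k * b w x ((k:ℤ) - N) := by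
  have hm1 : (-1 : ℂ) ≠ 0 := by norm_num
  have hwN : w ^ N ≠ 0 := pow_ne_zero _ hw0
  set y : ℂ := -x * (w ^ N)⁻¹ with hy
  have hyN : y ^ N * w ^ (Tn N) ≠ 0 := by
    apply mul_ne_zero (pow_ne_zero _ ?_) (pow_ne_zero _ hw0)
    rw [hy]; exact mul_ne_zero (neg_ne_zero.mpr hx) (inv_ne_zero hwN)
  -- split the Gauss product
  have hsplit : ∏ j ∈ range (2*N), (1 + y * w ^ j)
      = (∏ j ∈ range N, (1 + y * w ^ j)) * ∏ j ∈ range N, (1 + y * w ^ (N + j)) := by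
    rw [two_mul, prod_range_add]
  have hsecond : ∏ j ∈ range N, (1 + y * w ^ (N + j)) = ∏ j ∈ range N, (1 - x * w ^ j) := by
    refine prod_congr rfl fun j _ => ?_
    rw [hy, pow_add]
    field_simp
    ring
  have hfirst : ∏ j ∈ range N, (1 + y * w ^ j)
      = (y ^ N * w ^ (Tn N)) * ∏ j ∈ range N, (1 - w ^ (j+1) * x⁻¹) := by
    have step1 : ∏ j ∈ range N, (1 + y * w ^ j)
        = ∏ j ∈ range N, ((y * w ^ j) * (1 - w ^ (N - j) * x⁻¹)) := by
      refine prod_congr rfl fun j hj => ?_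
      have hjN : j < N := mem_range.mp hj
      have hww : w ^ j * w ^ (N - j) = w ^ N := by rw [← pow_add]; congr 1; omega
      have : y * w ^ j * (w ^ (N-j) * x⁻¹) = -1 := by
        calc y * w ^ j * (w ^ (N-j) * x⁻¹)
            = -(x * x⁻¹) * ((w ^ N)⁻¹ * (w ^ j * w ^ (N - j))) := by rw [hy]; ring
          _ = -1 := by rw [hww, inv_mul_cancel₀ hwN, mul_inv_cancel₀ hx]; ring
      calc 1 + y * w ^ j = y * w ^ j - (y * w ^ j * (w ^ (N-j) * x⁻¹)) := by
            rw [this]; ring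
        _ = (y * w ^ j) * (1 - w ^ (N - j) * x⁻¹) := by ring
    have step2 : ∏ j ∈ range N, (1 - w ^ (N - j) * x⁻¹)
        = ∏ j ∈ range N, (1 - w ^ (j+1) * x⁻¹) := by
      rw [← prod_range_reflect]
      refine prod_congr rfl fun j hj => ?_
      have hjN : j < N := mem_range.mp hj
      congr 3
      omega
    rw [step1, prod_mul_distrib, step2, prod_mul_distrib, prod_pow_eq_pow_sum, prod_const,
      card_range, ← Tn_sum]
  -- the per-term coefficient identity
  have key : ∀ k ∈ range (2*N+1), G w (2*N) k * w ^ (Tn k) * y ^ k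
      = G w (2*N) k * b w x ((k:ℤ) - N) * (y ^ N * w ^ (Tn N)) := by
    intro k hk
    have hexp : Tn k + N*N = t ((k:ℤ) - N) + N*k + Tn N := by
      have h2 : (2:ℤ) * ((Tn k : ℤ) + N*N) = 2 * ((t ((k:ℤ) - N) : ℤ) + N*k + Tn N) := by
        have e1 := two_Tn k
        have e2 := two_Tn N
        have e3 := two_t ((k:ℤ) - N)
        push_cast at e1 e2 e3 ⊢
        linear_combination e1 - e2 - e3
      have h3 : ((Tn k : ℤ) + N*N) = ((t ((k:ℤ) - N) : ℤ) + N*k + Tn N) := by linarith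
      exact_mod_cast h3
    have hyk : ∀ m : ℕ, y ^ m = (-1:ℂ) ^ m * x ^ m * ((w ^ (N*m))⁻¹) := by
      intro m
      rw [hy, show -x * (w ^ N)⁻¹ = (-1) * x * (w ^ N)⁻¹ from by ring, mul_pow, mul_pow,
        ← inv_pow, ← pow_mul, inv_pow]
    rw [b, zpow_sub₀ hm1, zpow_sub₀ hx, zpow_natCast, zpow_natCast, zpow_natCast, zpow_natCast,
      hyk k, hyk N]
    rw [div_eq_mul_inv, div_eq_mul_inv]
    field_simp
    have hwpow : w ^ (Tn k) * w ^ (N*N) = w ^ (t ((k:ℤ) - N)) * w ^ (Tn N) * w ^ (N*k) := by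
      rw [← pow_add, ← pow_add, ← pow_add, hexp]
      congr 1
      omega
    linear_combination (G w (2*N) k) * hwpow
  -- assemble
  have hg := gauss w y (2*N)
  rw [hsplit, hsecond, hfirst, Finset.sum_congr rfl key, ← Finset.sum_mul] at hg
  refine mul_right_cancel₀ hyN ?_
  rw [← hg]
  ring




/-- ‖∏ (1 + f i) - 1‖ ≤ ∏ (1 + ‖f i‖) - 1 -/
lemma norm_prod_one_add_sub_one_le {ι : Type*} (s : Finset ι) (f : ι → ℂ) :
    ‖(∏ i ∈ s, (1 + f i)) - 1‖ ≤ (∏ i ∈ s, (1 + ‖f i‖)) - 1 := by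
  classical
  induction s using Finset.induction_on with
  | empty => simp
  | @insert a s' ha ih =>
    rw [prod_insert ha, prod_insert ha]
    have h1 : (1 + f a) * ∏ i ∈ s', (1 + f i) - 1
        = ((∏ i ∈ s', (1 + f i)) - 1) * (1 + f a) + f a := by ring
    have hP : (1:ℝ) ≤ ∏ i ∈ s', (1 + ‖f i‖) := by
      calc (1:ℝ) = ∏ _i ∈ s', 1 := by simp
        _ ≤ ∏ i ∈ s', (1 + ‖f i‖) :=
          Finset.prod_le_prod (fun _ _ => zero_le_one)
            (fun i _ => by linarith [norm_nonneg (f i)])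
    calc ‖(1 + f a) * ∏ i ∈ s', (1 + f i) - 1‖
        = ‖((∏ i ∈ s', (1 + f i)) - 1) * (1 + f a) + f a‖ := by rw [h1]
      _ ≤ ‖(∏ i ∈ s', (1 + f i)) - 1‖ * ‖1 + f a‖ + ‖f a‖ :=
          le_trans (norm_add_le _ _) (by rw [norm_mul])
      _ ≤ ((∏ i ∈ s', (1 + ‖f i‖)) - 1) * (1 + ‖f a‖) + ‖f a‖ := by
          have hn : ‖(1:ℂ) + f a‖ ≤ 1 + ‖f a‖ := by
            simpa using norm_add_le (1:ℂ) (f a)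
          have h2 : ‖(∏ i ∈ s', (1 + f i)) - 1‖ * ‖1 + f a‖
              ≤ ((∏ i ∈ s', (1 + ‖f i‖)) - 1) * (1 + ‖f a‖) :=
            mul_le_mul ih hn (norm_nonneg _) (by linarith)
          linarith
      _ = (1 + ‖f a‖) * ∏ i ∈ s', (1 + ‖f i‖) - 1 := by ring

variable {w : ℂ}

lemma geom_partial (hw : ‖w‖ < 1) (m : ℕ) : ∑ j ∈ range m, ‖w‖ ^ (j+1) ≤ (1 - ‖w‖)⁻¹ := by
  have h0 : (0:ℝ) ≤ ‖w‖ := norm_nonneg w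
  have h1 : ∀ j, ‖w‖ ^ (j+1) ≤ ‖w‖ ^ j := fun j => by
    rw [pow_succ]
    nlinarith [pow_nonneg h0 j, hw]
  calc ∑ j ∈ range m, ‖w‖ ^ (j+1) ≤ ∑ j ∈ range m, ‖w‖ ^ j :=
        Finset.sum_le_sum fun j _ => h1 j
    _ ≤ ∑' j : ℕ, ‖w‖ ^ j :=
        Summable.sum_le_tsum _ (fun j _ => pow_nonneg h0 j) (summable_geometric_of_lt_one h0 hw)
    _ = (1 - ‖w‖)⁻¹ := tsum_geometric_of_lt_one h0 hw

/-- upper bound for products of ‖1 - w^{s+j+1}‖ -/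
lemma prod_norm_le (hw : ‖w‖ < 1) (s m : ℕ) :
    ∏ j ∈ range m, ‖1 - w ^ (s + j + 1)‖ ≤ Real.exp ((1 - ‖w‖)⁻¹) := by
  have h0 : (0:ℝ) ≤ ‖w‖ := norm_nonneg w
  have step : ∀ j, ‖(1:ℂ) - w ^ (s + j + 1)‖ ≤ Real.exp (‖w‖ ^ (j+1)) := by
    intro j
    have h1 : ‖(1:ℂ) - w ^ (s + j + 1)‖ ≤ 1 + ‖w‖ ^ (s + j + 1) := by
      simpa [norm_pow] using norm_sub_le (1:ℂ) (w ^ (s+j+1))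
    have h2 : ‖w‖ ^ (s + j + 1) ≤ ‖w‖ ^ (j + 1) :=
      pow_le_pow_of_le_one h0 (le_of_lt hw) (by omega)
    calc ‖(1:ℂ) - w ^ (s + j + 1)‖ ≤ 1 + ‖w‖ ^ (j+1) := by linarith
      _ ≤ Real.exp (‖w‖ ^ (j+1)) := by
          have := Real.add_one_le_exp (‖w‖ ^ (j+1)); linarith
  calc ∏ j ∈ range m, ‖1 - w ^ (s + j + 1)‖
      ≤ ∏ j ∈ range m, Real.exp (‖w‖ ^ (j+1)) :=
        Finset.prod_le_prod (fun j _ => norm_nonneg _) (fun j _ => step j)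
    _ = Real.exp (∑ j ∈ range m, ‖w‖ ^ (j+1)) := by rw [Real.exp_sum]
    _ ≤ Real.exp ((1 - ‖w‖)⁻¹) := Real.exp_le_exp.mpr (geom_partial hw m)

lemma prod_norm_ge (hw : ‖w‖ < 1) (m : ℕ) :
    Real.exp (-((1 - ‖w‖)⁻¹ * (1 - ‖w‖)⁻¹)) ≤ ∏ j ∈ range m, ‖1 - w ^ (j + 1)‖ := by
  have h0 : (0:ℝ) ≤ ‖w‖ := norm_nonneg w
  have h1r : (0:ℝ) < 1 - ‖w‖ := by linarith
  have step : ∀ j : ℕ, Real.exp (-(‖w‖ ^ (j+1) * (1 - ‖w‖)⁻¹)) ≤ ‖(1:ℂ) - w ^ (j + 1)‖ := by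
    intro j
    set u : ℝ := ‖w‖ ^ (j+1) with hu
    have hu0 : 0 ≤ u := pow_nonneg h0 _
    have hur : u ≤ ‖w‖ := pow_le_of_le_one h0 (le_of_lt hw) (by omega)
    have h1u : 0 < 1 - u := by linarith
    -- exp(-(u/(1-u))) ≤ 1 - u
    have key : Real.exp (-(u / (1 - u))) ≤ 1 - u := by
      have hpos : (0:ℝ) < 1 + u / (1 - u) := by positivity
      have he : 1 + u / (1 - u) ≤ Real.exp (u / (1 - u)) := by
        have := Real.add_one_le_exp (u / (1 - u)); linarith
      have hinv : (Real.exp (u / (1 - u)))⁻¹ ≤ (1 + u / (1 - u))⁻¹ :=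
        inv_anti₀ hpos he
      have hid : (1 + u / (1 - u))⁻¹ = 1 - u := by field_simp; ring
      rw [Real.exp_neg]
      rw [hid] at hinv
      exact hinv
    have hmono : -(u * (1 - ‖w‖)⁻¹) ≤ -(u / (1 - u)) := by
      rw [neg_le_neg_iff, div_eq_mul_inv]
      have : (1 - u)⁻¹ ≤ (1 - ‖w‖)⁻¹ := by
        apply inv_anti₀ h1r
        linarith
      exact mul_le_mul_of_nonneg_left this hu0
    have hnorm : 1 - u ≤ ‖(1:ℂ) - w ^ (j+1)‖ := by
      have := norm_sub_norm_le (1:ℂ) (w ^ (j+1))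
      simpa [norm_pow] using this
    calc Real.exp (-(u * (1 - ‖w‖)⁻¹)) ≤ Real.exp (-(u / (1 - u))) :=
          Real.exp_le_exp.mpr hmono
      _ ≤ 1 - u := key
      _ ≤ _ := hnorm
  calc Real.exp (-((1 - ‖w‖)⁻¹ * (1 - ‖w‖)⁻¹))
      ≤ Real.exp (-((∑ j ∈ range m, ‖w‖ ^ (j+1)) * (1 - ‖w‖)⁻¹)) := by
        apply Real.exp_le_exp.mpr
        rw [neg_le_neg_iff]
        exact mul_le_mul_of_nonneg_right (geom_partial hw m) (le_of_lt (by positivity))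
    _ = ∏ j ∈ range m, Real.exp (-(‖w‖ ^ (j+1) * (1 - ‖w‖)⁻¹)) := by
        rw [← Real.exp_sum]
        congr 1
        rw [Finset.sum_mul, ← Finset.sum_neg_distrib]
    _ ≤ ∏ j ∈ range m, ‖1 - w ^ (j + 1)‖ :=
        Finset.prod_le_prod (fun j _ => le_of_lt (Real.exp_pos _)) (fun j _ => step j)

lemma one_sub_pow_ne (hw : ‖w‖ < 1) (e : ℕ) (he : 1 ≤ e) : (1:ℂ) - w ^ e ≠ 0 := by
  intro h
  rw [sub_eq_zero] at h
  have h1 : ‖w ^ e‖ < 1 := by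
    rw [norm_pow]
    exact pow_lt_one₀ (norm_nonneg w) hw (by omega)
  rw [← h] at h1
  simp at h1

lemma D_ne_zero (hw : ‖w‖ < 1) (m : ℕ) : D w m ≠ 0 :=
  Finset.prod_ne_zero_iff.mpr fun j _ => one_sub_pow_ne hw (j+1) (by omega)

/-- products of shifted factors tend to 1 -/
lemma tendsto_prod_one (hw : ‖w‖ < 1) (m s : ℕ → ℕ) (hs : Tendsto s atTop atTop) :
    Tendsto (fun N => ∏ j ∈ range (m N), (1 - w ^ (s N + j + 1))) atTop (𝓝 1) := by
  have h0 : (0:ℝ) ≤ ‖w‖ := norm_nonneg w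
  rw [tendsto_iff_norm_sub_tendsto_zero]
  have hb : ∀ N, ‖(∏ j ∈ range (m N), (1 - w ^ (s N + j + 1))) - 1‖
      ≤ Real.exp (‖w‖ ^ (s N) * (1 - ‖w‖)⁻¹) - 1 := by
    intro N
    have h1 : ∀ j : ℕ, (1:ℂ) - w ^ (s N + j + 1) = 1 + (-(w ^ (s N + j + 1))) := fun j => by ring
    calc ‖(∏ j ∈ range (m N), (1 - w ^ (s N + j + 1))) - 1‖
        = ‖(∏ j ∈ range (m N), (1 + (-(w ^ (s N + j + 1))))) - 1‖ := by
          rw [Finset.prod_congr rfl fun j _ => h1 j]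
      _ ≤ (∏ j ∈ range (m N), (1 + ‖-(w ^ (s N + j + 1))‖)) - 1 :=
          norm_prod_one_add_sub_one_le _ _
      _ ≤ Real.exp (‖w‖ ^ (s N) * (1 - ‖w‖)⁻¹) - 1 := by
          have hstep : ∀ j, 1 + ‖-(w ^ (s N + j + 1))‖ ≤ Real.exp (‖w‖ ^ (s N) * ‖w‖ ^ (j+1)) := by
            intro j
            have : ‖-(w ^ (s N + j + 1))‖ = ‖w‖ ^ (s N) * ‖w‖ ^ (j+1) := by
              rw [norm_neg, norm_pow, ← pow_add, show s N + (j+1) = s N + j + 1 from by omega]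
            rw [this]
            linarith [Real.add_one_le_exp (‖w‖ ^ (s N) * ‖w‖ ^ (j+1))]
          have h2 : ∏ j ∈ range (m N), (1 + ‖-(w ^ (s N + j + 1))‖)
              ≤ Real.exp (∑ j ∈ range (m N), ‖w‖ ^ (s N) * ‖w‖ ^ (j+1)) := by
            rw [Real.exp_sum]
            exact Finset.prod_le_prod (fun j _ => by positivity) (fun j _ => hstep j)
          have h3 : ∑ j ∈ range (m N), ‖w‖ ^ (s N) * ‖w‖ ^ (j+1)
              ≤ ‖w‖ ^ (s N) * (1 - ‖w‖)⁻¹ := by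
            rw [← Finset.mul_sum]
            exact mul_le_mul_of_nonneg_left (geom_partial hw (m N)) (pow_nonneg h0 _)
          have := Real.exp_le_exp.mpr h3
          linarith
  have hpow : Tendsto (fun N => ‖w‖ ^ (s N)) atTop (𝓝 0) :=
    (tendsto_pow_atTop_nhds_zero_of_lt_one h0 hw).comp hs
  have hup : Tendsto (fun N => Real.exp (‖w‖ ^ (s N) * (1 - ‖w‖)⁻¹) - 1) atTop (𝓝 0) := by
    have h1 : Tendsto (fun N => ‖w‖ ^ (s N) * (1 - ‖w‖)⁻¹) atTop (𝓝 0) := by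
      simpa using hpow.mul_const ((1 - ‖w‖)⁻¹)
    have h2 := (Real.continuous_exp.tendsto 0).comp h1
    simpa using h2.sub_const 1
  exact squeeze_zero (fun N => norm_nonneg _) hb hup

end JTP
namespace JTP
open Finset Filter Topology
variable {w x : ℂ}

noncomputable def coef (w : ℂ) (N : ℕ) (n : ℤ) : ℂ :=
  if 0 ≤ n + N ∧ n ≤ N then D w N * G w (2*N) (n + N).toNat else 0

noncomputable def Cb (w : ℂ) : ℝ :=
  Real.exp ((1-‖w‖)⁻¹) * (Real.exp ((1-‖w‖)⁻¹) / Real.exp (-((1-‖w‖)⁻¹ * (1-‖w‖)⁻¹)))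

lemma coef_bound (hw : ‖w‖ < 1) (N : ℕ) (n : ℤ) : ‖coef w N n‖ ≤ Cb w := by
  have hDnorm : ∀ m : ℕ, ‖D w m‖ = ∏ j ∈ range m, ‖1 - w ^ (j+1)‖ := fun m => norm_prod _ _
  rw [coef]
  split_ifs with h
  · set k := (n + N).toNat with hk
    have hk2 : k ≤ 2*N := by omega
    have hGD := G_mul_D w (2*N) k hk2
    have hDk : D w k ≠ 0 := D_ne_zero hw k
    have hG : G w (2*N) k = (∏ j ∈ range k, (1 - w ^ (2*N - k + j + 1))) / D w k :=
      eq_div_of_mul_eq hDk hGD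
    rw [norm_mul, hG, norm_div]
    have hDN : ‖D w N‖ ≤ Real.exp ((1-‖w‖)⁻¹) := by
      rw [hDnorm N]
      have : ∏ j ∈ range N, ‖1 - w ^ (j+1)‖ = ∏ j ∈ range N, ‖1 - w ^ (0 + j + 1)‖ :=
        Finset.prod_congr rfl fun j _ => by norm_num
      rw [this]
      exact prod_norm_le hw 0 N
    have hP : ‖∏ j ∈ range k, (1 - w ^ (2*N - k + j + 1))‖ ≤ Real.exp ((1-‖w‖)⁻¹) := by
      rw [norm_prod]
      exact prod_norm_le hw (2*N - k) k
    have hDk' : Real.exp (-((1-‖w‖)⁻¹ * (1-‖w‖)⁻¹)) ≤ ‖D w k‖ := by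
      rw [hDnorm k]
      exact prod_norm_ge hw k
    rw [Cb]
    have hdiv : ‖∏ j ∈ range k, (1 - w ^ (2*N - k + j + 1))‖ / ‖D w k‖
        ≤ Real.exp ((1-‖w‖)⁻¹) / Real.exp (-((1-‖w‖)⁻¹ * (1-‖w‖)⁻¹)) :=
      div_le_div₀ (le_of_lt (Real.exp_pos _)) hP (Real.exp_pos _) hDk'
    exact mul_le_mul hDN hdiv (by positivity) (le_of_lt (Real.exp_pos _))
  · rw [norm_zero, Cb]
    positivity

lemma coef_tendsto (hw : ‖w‖ < 1) (n : ℤ) :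
    Tendsto (fun N => coef w N n) atTop (𝓝 1) := by
  rcases le_or_gt 0 n with hn | hn
  · -- n ≥ 0
    set p := n.toNat with hp
    have hev : (fun N => coef w N n) =ᶠ[atTop] fun N =>
        (∏ j ∈ range (N + p), (1 - w ^ (N - p + j + 1)))
          / ∏ j ∈ range p, (1 - w ^ (N + j + 1)) := by
      filter_upwards [eventually_ge_atTop p] with N hN
      have hcond : 0 ≤ n + N ∧ n ≤ N := ⟨by omega, by omega⟩
      rw [coef, if_pos hcond]
      have hkn : (n + N).toNat = N + p := by omega
      rw [hkn]
      have hGD := G_mul_D w (2*N) (N+p) (by omega)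
      have hBeq : (∏ j ∈ range (N+p), (1 - w ^ (2*N - (N+p) + j + 1)))
          = ∏ j ∈ range (N+p), (1 - w ^ (N - p + j + 1)) :=
        Finset.prod_congr rfl fun j _ => by
          rw [show 2*N - (N+p) + j + 1 = N - p + j + 1 from by omega]
      have hDsplit : D w (N + p) = D w N * ∏ j ∈ range p, (1 - w ^ (N + j + 1)) := by
        rw [D, D, prod_range_add]
      have hEne : (∏ j ∈ range p, (1 - w ^ (N + j + 1))) ≠ 0 :=
        Finset.prod_ne_zero_iff.mpr fun j _ => one_sub_pow_ne hw _ (by omega)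
      rw [eq_div_iff hEne]
      have hstep : D w N * G w (2*N) (N+p) * ∏ j ∈ range p, (1 - w ^ (N + j + 1))
          = G w (2*N) (N+p) * D w (N + p) := by rw [hDsplit]; ring
      rw [hstep, hGD, hBeq]
    have hT : Tendsto (fun N =>
        (∏ j ∈ range (N + p), (1 - w ^ (N - p + j + 1)))
          / ∏ j ∈ range p, (1 - w ^ (N + j + 1))) atTop (𝓝 1) := by
      have hB := tendsto_prod_one hw (fun N => N + p) (fun N => N - p) (tendsto_sub_atTop_nat p)
      have hE := tendsto_prod_one hw (fun _ => p) (fun N => N) tendsto_id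
      have h := hB.div hE one_ne_zero
      rw [div_one] at h
      exact h
    exact Tendsto.congr' hev.symm hT
  · -- n < 0
    set q := (-n).toNat with hq
    have hq1 : 1 ≤ q := by omega
    have hev : (fun N => coef w N n) =ᶠ[atTop] fun N =>
        (∏ j ∈ range q, (1 - w ^ (N - q + j + 1)))
          * ∏ j ∈ range (N - q), (1 - w ^ (N + q + j + 1)) := by
      filter_upwards [eventually_ge_atTop q] with N hN
      have hcond : 0 ≤ n + N ∧ n ≤ N := ⟨by omega, by omega⟩
      rw [coef, if_pos hcond]
      have hkn : (n + N).toNat = N - q := by omega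
      rw [hkn]
      have hGD := G_mul_D w (2*N) (N-q) (by omega)
      have hBeq : (∏ j ∈ range (N-q), (1 - w ^ (2*N - (N-q) + j + 1)))
          = ∏ j ∈ range (N-q), (1 - w ^ (N + q + j + 1)) :=
        Finset.prod_congr rfl fun j _ => by
          rw [show 2*N - (N-q) + j + 1 = N + q + j + 1 from by omega]
      have hDsplit : D w N = D w (N - q) * ∏ j ∈ range q, (1 - w ^ (N - q + j + 1)) := by
        have h1 : D w ((N - q) + q) = D w (N - q) * ∏ j ∈ range q, (1 - w ^ ((N - q) + j + 1)) := by
          rw [D, D, prod_range_add]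
        rw [show (N - q) + q = N from by omega] at h1
        exact h1
      calc D w N * G w (2*N) (N-q)
          = (∏ j ∈ range q, (1 - w ^ (N - q + j + 1))) * (G w (2*N) (N-q) * D w (N-q)) := by
            rw [hDsplit]; ring
        _ = _ := by rw [hGD, hBeq]
    have hT : Tendsto (fun N =>
        (∏ j ∈ range q, (1 - w ^ (N - q + j + 1)))
          * ∏ j ∈ range (N - q), (1 - w ^ (N + q + j + 1))) atTop (𝓝 1) := by
      have hE := tendsto_prod_one hw (fun _ => q) (fun N => N - q) (tendsto_sub_atTop_nat q)
      have hB := tendsto_prod_one hw (fun N => N - q) (fun N => N + q) (tendsto_add_atTop_nat q)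
      simpa using hE.mul hB
    exact Tendsto.congr' hev.symm hT

lemma norm_b (n : ℤ) : ‖b w x n‖ = ‖w‖ ^ (t n) * ‖x‖ ^ n := by
  rw [b, norm_mul, norm_mul, norm_zpow, norm_zpow, norm_pow, norm_neg, norm_one, one_zpow,
    one_mul]

lemma t_succ (m : ℕ) : t ((m:ℤ)+1) = t (m:ℤ) + m := by
  have h1 := two_t ((m:ℤ)+1)
  have h2 := two_t (m:ℤ)
  have : (2 * t ((m:ℤ)+1) : ℤ) = 2 * (t (m:ℤ) + m) := by
    push_cast at h1 h2 ⊢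
    linear_combination h1 - h2
  omega

lemma t_negsucc (m : ℕ) : t (-((m:ℤ)+1)) = t (-(m:ℤ)) + m + 1 := by
  have h1 := two_t (-((m:ℤ)+1))
  have h2 := two_t (-(m:ℤ))
  have : (2 * t (-((m:ℤ)+1)) : ℤ) = 2 * (t (-(m:ℤ)) + m + 1) := by
    push_cast at h1 h2 ⊢
    linear_combination h1 - h2
  omega

lemma summable_b (hw : ‖w‖ < 1) (hx : x ≠ 0) : Summable (fun n : ℤ => ‖b w x n‖) := by
  have h0 : (0:ℝ) ≤ ‖w‖ := norm_nonneg w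
  have hX : (‖x‖:ℝ) ≠ 0 := norm_ne_zero_iff.mpr hx
  apply Summable.of_nat_of_neg
  · apply summable_of_ratio_norm_eventually_le (r := 1/2) (by norm_num)
    have hev : ∀ᶠ m : ℕ in atTop, ‖w‖ ^ m * ‖x‖ ≤ 1/2 := by
      have hT : Tendsto (fun m : ℕ => ‖w‖ ^ m * ‖x‖) atTop (𝓝 0) := by
        simpa using (tendsto_pow_atTop_nhds_zero_of_lt_one h0 hw).mul_const ‖x‖
      filter_upwards [hT.eventually (gt_mem_nhds (by norm_num : (0:ℝ) < 1/2))] with m hm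
      exact le_of_lt hm
    filter_upwards [hev] with m hm
    rw [norm_norm, norm_norm, norm_b, norm_b]
    have e1 : ((m+1 : ℕ) : ℤ) = (m:ℤ) + 1 := by push_cast; ring
    rw [e1, t_succ, zpow_add_one₀ hX, pow_add]
    calc ‖w‖ ^ t (m:ℤ) * ‖w‖ ^ m * (‖x‖ ^ (m:ℤ) * ‖x‖)
        = (‖w‖ ^ m * ‖x‖) * (‖w‖ ^ t (m:ℤ) * ‖x‖ ^ (m:ℤ)) := by ring
      _ ≤ (1/2) * (‖w‖ ^ t (m:ℤ) * ‖x‖ ^ (m:ℤ)) := by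
          apply mul_le_mul_of_nonneg_right hm
          positivity
  · apply summable_of_ratio_norm_eventually_le (r := 1/2) (by norm_num)
    have hev : ∀ᶠ m : ℕ in atTop, ‖w‖ ^ (m+1) * ‖x‖⁻¹ ≤ 1/2 := by
      have hT : Tendsto (fun m : ℕ => ‖w‖ ^ (m+1) * ‖x‖⁻¹) atTop (𝓝 0) := by
        have := ((tendsto_pow_atTop_nhds_zero_of_lt_one h0 hw).comp
          (tendsto_add_atTop_nat 1)).mul_const ‖x‖⁻¹
        simpa [Function.comp] using this
      filter_upwards [hT.eventually (gt_mem_nhds (by norm_num : (0:ℝ) < 1/2))] with m hm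
      exact le_of_lt hm
    filter_upwards [hev] with m hm
    rw [norm_norm, norm_norm, norm_b, norm_b]
    have e1 : (-((m+1 : ℕ) : ℤ)) = -((m:ℤ)+1) := by push_cast; ring
    rw [e1, t_negsucc]
    have e2 : ‖x‖ ^ (-((m:ℤ)+1)) = ‖x‖ ^ (-(m:ℤ)) * ‖x‖⁻¹ := by
      rw [show -((m:ℤ)+1) = -(m:ℤ) + (-1) from by ring, zpow_add₀ hX, zpow_neg_one]
    rw [e2]
    calc ‖w‖ ^ (t (-(m:ℤ)) + m + 1) * (‖x‖ ^ (-(m:ℤ)) * ‖x‖⁻¹)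
        = (‖w‖ ^ (m+1) * ‖x‖⁻¹) * (‖w‖ ^ t (-(m:ℤ)) * ‖x‖ ^ (-(m:ℤ))) := by
          rw [show t (-(m:ℤ)) + m + 1 = t (-(m:ℤ)) + (m + 1) from by omega, pow_add]
          ring
      _ ≤ (1/2) * (‖w‖ ^ t (-(m:ℤ)) * ‖x‖ ^ (-(m:ℤ))) := by
          apply mul_le_mul_of_nonneg_right hm
          positivity

/-- the triple product factor -/
noncomputable def fP (w x : ℂ) (m : ℕ) : ℂ :=
  (1 - w ^ (m+1)) * ((1 - x * w ^ m) * (1 - w ^ (m+1) * x⁻¹))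

lemma Fn_eq (hw0 : w ≠ 0) (hx : x ≠ 0) (N : ℕ) :
    ∏ j ∈ range N, fP w x j = ∑' n : ℤ, coef w N n * b w x n := by
  have hsum : ∏ j ∈ range N, fP w x j
      = ∑ k ∈ range (2*N+1), (D w N * G w (2*N) k) * b w x ((k:ℤ) - N) := by
    calc ∏ j ∈ range N, fP w x j
        = D w N * ((∏ j ∈ range N, (1 - x * w ^ j)) * ∏ j ∈ range N, (1 - w ^ (j+1) * x⁻¹)) := by
          simp only [fP, D]
          rw [prod_mul_distrib, prod_mul_distrib]
      _ = D w N * ∑ k ∈ range (2*N+1), G w (2*N) k * b w x ((k:ℤ) - N) := by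
          rw [triple_finite w x hw0 hx N]
      _ = _ := by rw [Finset.mul_sum]; exact Finset.sum_congr rfl fun k _ => by ring
  rw [hsum]
  rw [tsum_eq_sum (s := Finset.Icc (-(N:ℤ)) (N:ℤ))
    (fun n hn => by
      rw [coef, if_neg, zero_mul]
      rw [Finset.mem_Icc] at hn
      omega)]
  refine Finset.sum_nbij' (i := fun (k:ℕ) => (k:ℤ) - N) (j := fun (n:ℤ) => (n + N).toNat)
    ?_ ?_ ?_ ?_ ?_
  · intro k hk
    simp only [Finset.mem_range] at hk
    simp only [Finset.mem_Icc]
    omega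
  · intro n hn
    simp only [Finset.mem_Icc] at hn
    simp only [Finset.mem_range]
    omega
  · intro k hk
    simp only [Finset.mem_range] at hk
    omega
  · intro n hn
    simp only [Finset.mem_Icc] at hn
    omega
  · intro k hk
    simp only [Finset.mem_range] at hk
    have hc : (0:ℤ) ≤ ((k:ℤ) - N) + N ∧ (k:ℤ) - N ≤ N := by omega
    rw [coef, if_pos hc, show ((k:ℤ) - N + N).toNat = k from by omega]

lemma tendsto_Fn (hw : ‖w‖ < 1) (hw0 : w ≠ 0) (hx : x ≠ 0) :
    Tendsto (fun N => ∏ j ∈ range N, fP w x j) atTop (𝓝 (∑' n : ℤ, b w x n)) := by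
  have hT := tendsto_tsum_of_dominated_convergence
    (f := fun (N : ℕ) (n : ℤ) => coef w N n * b w x n) (g := b w x)
    (bound := fun n => Cb w * ‖b w x n‖)
    ((summable_b hw hx).mul_left (Cb w))
    (fun n => by simpa using (coef_tendsto hw n).mul_const (b w x n))
    (Eventually.of_forall fun N n => by
      rw [norm_mul]
      exact mul_le_mul_of_nonneg_right (coef_bound hw N n) (norm_nonneg _))
  exact hT.congr fun N => (Fn_eq hw0 hx N).symm

end JTP
namespace JTP
open Finset Filter Topology Complex
variable {w x : ℂ}

lemma seven (A B C : ℂ) : ‖(1-A)*((1-B)*(1-C)) - 1‖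
    ≤ (‖A‖+‖B‖+‖C‖) + (‖A‖*‖B‖+‖A‖*‖C‖+‖B‖*‖C‖) + ‖A‖*‖B‖*‖C‖ := by
  have hexp : (1-A)*((1-B)*(1-C)) - 1 = -(A + B + C) + (A*B + A*C + B*C) + -(A*B*C) := by ring
  rw [hexp]
  calc ‖-(A + B + C) + (A*B + A*C + B*C) + -(A*B*C)‖
      ≤ ‖-(A + B + C)‖ + ‖A*B + A*C + B*C‖ + ‖-(A*B*C)‖ := norm_add₃_le
    _ = ‖A + B + C‖ + ‖A*B + A*C + B*C‖ + ‖A*B*C‖ := by rw [norm_neg, norm_neg]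
    _ ≤ (‖A‖+‖B‖+‖C‖) + (‖A*B‖+‖A*C‖+‖B*C‖) + ‖A*B*C‖ := by
        have u1 : ‖A + B + C‖ ≤ ‖A‖+‖B‖+‖C‖ := norm_add₃_le
        have u2 : ‖A*B + A*C + B*C‖ ≤ ‖A*B‖+‖A*C‖+‖B*C‖ := norm_add₃_le
        linarith
    _ = (‖A‖+‖B‖+‖C‖) + (‖A‖*‖B‖+‖A‖*‖C‖+‖B‖*‖C‖) + ‖A‖*‖B‖*‖C‖ := by
        simp only [norm_mul]

lemma fP_sub_one_bound (hw : ‖w‖ < 1) (m : ℕ) :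
    ‖fP w x m - 1‖ ≤ (3*(1+‖x‖+‖x⁻¹‖) + 3*(1+‖x‖+‖x⁻¹‖)^2 + (1+‖x‖+‖x⁻¹‖)^3) * ‖w‖^m := by
  have h0 : (0:ℝ) ≤ ‖w‖ := norm_nonneg w
  have h1 := seven (w^(m+1)) (x * w^m) (w^(m+1) * x⁻¹)
  rw [show (1 - w^(m+1)) * ((1 - x * w^m) * (1 - w^(m+1) * x⁻¹)) = fP w x m from rfl] at h1
  set K : ℝ := 1+‖x‖+‖x⁻¹‖ with hKdef
  have hK1 : (1:ℝ) ≤ K := by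
    have := norm_nonneg x; have := norm_nonneg x⁻¹
    simp only [hKdef]; linarith
  have hrm : ‖w‖^m ≤ 1 := pow_le_one₀ h0 hw.le
  have hrm0 : (0:ℝ) ≤ ‖w‖^m := pow_nonneg h0 m
  have hKm : (0:ℝ) ≤ K * ‖w‖^m := by positivity
  have hpow : ‖w‖^(m+1) ≤ ‖w‖^m := pow_le_pow_of_le_one h0 hw.le (by omega)
  have hA : ‖w^(m+1)‖ ≤ K * ‖w‖^m := by
    rw [norm_pow]
    nlinarith
  have hB : ‖x * w^m‖ ≤ K * ‖w‖^m := by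
    rw [norm_mul, norm_pow]
    apply mul_le_mul_of_nonneg_right _ hrm0
    simp only [hKdef]; linarith [norm_nonneg x⁻¹]
  have hC : ‖w^(m+1) * x⁻¹‖ ≤ K * ‖w‖^m := by
    rw [norm_mul, norm_pow]
    have h2 : ‖w‖^(m+1) * ‖x⁻¹‖ ≤ ‖w‖^m * K := by
      apply mul_le_mul hpow _ (norm_nonneg _) hrm0
      simp only [hKdef]; linarith [norm_nonneg x]
    linarith [h2]
  have hA' : ‖w^(m+1)‖ ≤ K := le_trans hA (by nlinarith)
  have hB' : ‖x * w^m‖ ≤ K := le_trans hB (by nlinarith)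
  have hC' : ‖w^(m+1) * x⁻¹‖ ≤ K := le_trans hC (by nlinarith)
  have hAB : ‖w^(m+1)‖*‖x * w^m‖ ≤ K * ‖w‖^m * K :=
    mul_le_mul hA hB' (norm_nonneg _) hKm
  have hAC : ‖w^(m+1)‖*‖w^(m+1) * x⁻¹‖ ≤ K * ‖w‖^m * K :=
    mul_le_mul hA hC' (norm_nonneg _) hKm
  have hBC : ‖x * w^m‖*‖w^(m+1) * x⁻¹‖ ≤ K * ‖w‖^m * K :=
    mul_le_mul hB hC' (norm_nonneg _) hKm
  have hABC : ‖w^(m+1)‖*‖x * w^m‖*‖w^(m+1) * x⁻¹‖ ≤ K * ‖w‖^m * K * K :=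
    mul_le_mul hAB hC' (norm_nonneg _) (by positivity)
  calc ‖fP w x m - 1‖
      ≤ _ := h1
    _ ≤ (K*‖w‖^m + K*‖w‖^m + K*‖w‖^m) + (K*‖w‖^m*K + K*‖w‖^m*K + K*‖w‖^m*K)
        + K*‖w‖^m*K*K :=
        add_le_add (add_le_add (add_le_add (add_le_add hA hB) hC)
          (add_le_add (add_le_add hAB hAC) hBC)) hABC
    _ = (3*K + 3*K^2 + K^3) * ‖w‖^m := by ring

lemma multipliable_fP (hw : ‖w‖ < 1) (hx : x ≠ 0) : Multipliable (fP w x) := by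
  have h0 : (0:ℝ) ≤ ‖w‖ := norm_nonneg w
  by_cases hzero : ∃ m, fP w x m = 0
  · obtain ⟨m0, hm0⟩ := hzero
    refine ⟨0, ?_⟩
    have hev : (fun _ : Finset ℕ => (0:ℂ)) =ᶠ[atTop] fun s => ∏ i ∈ s, fP w x i := by
      filter_upwards [eventually_ge_atTop ({m0} : Finset ℕ)] with s hs
      exact (Finset.prod_eq_zero (Finset.singleton_subset_iff.mp hs) hm0).symm
    exact (tendsto_congr' hev).mp tendsto_const_nhds
  · push_neg at hzero
    set CK : ℝ := 3*(1+‖x‖+‖x⁻¹‖) + 3*(1+‖x‖+‖x⁻¹‖)^2 + (1+‖x‖+‖x⁻¹‖)^3 with hCK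
    have hCKr : Tendsto (fun m : ℕ => CK * ‖w‖^m) atTop (𝓝 0) := by
      simpa using (tendsto_pow_atTop_nhds_zero_of_lt_one h0 hw).const_mul CK
    obtain ⟨M, hM⟩ := eventually_atTop.mp
      (hCKr.eventually (gt_mem_nhds (by norm_num : (0:ℝ) < 1/2)))
    have hlog : Summable (fun m => Complex.log (fP w x (m + M))) := by
      apply Summable.of_norm_bounded (g := fun m => (3/2) * (CK * ‖w‖^M) * ‖w‖^m)
      · exact (summable_geometric_of_lt_one h0 hw).mul_left _
      · intro m
        have hb := fP_sub_one_bound (x := x) hw (m + M)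
        rw [← hCK] at hb
        have hsmall : ‖fP w x (m+M) - 1‖ ≤ 1/2 := hb.trans (hM (m+M) (by omega)).le
        have hlb := Complex.norm_log_one_add_half_le_self (z := fP w x (m+M) - 1) hsmall
        rw [show (1 : ℂ) + (fP w x (m+M) - 1) = fP w x (m+M) from by ring] at hlb
        calc ‖Complex.log (fP w x (m+M))‖ ≤ 3/2 * ‖fP w x (m+M) - 1‖ := hlb
          _ ≤ 3/2 * (CK * ‖w‖^(m+M)) := by
              apply mul_le_mul_of_nonneg_left hb (by norm_num)
          _ = 3/2 * (CK * ‖w‖^M) * ‖w‖^m := by rw [pow_add]; ring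
    have hlog' : Summable (fun m => Complex.log (fP w x m)) := (summable_nat_add_iff M).mp hlog
    exact Complex.multipliable_of_summable_log hlog'

lemma main (w x : ℂ) (hw : ‖w‖ < 1) (hw0 : w ≠ 0) (hx : x ≠ 0) :
    Multipliable (fP w x) ∧ (∑' n : ℤ, b w x n) = ∏' m, fP w x m := by
  have hm := multipliable_fP hw hx
  refine ⟨hm, ?_⟩
  exact tendsto_nhds_unique (tendsto_Fn hw hw0 hx) hm.hasProd.tendsto_prod_nat

end JTP

/-- The Jacobi theta function θ(z) = Σ_{m∈ℤ} (-1)^m e^{iπm(m-1)τ} e^{2iπmz}. -/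
noncomputable def theta (τ z : ℂ) : ℂ :=
  ∑' m : ℤ, (-1 : ℂ) ^ m * Complex.exp ((Real.pi : ℂ) * Complex.I * m * (m - 1) * τ) *
    Complex.exp (2 * (Real.pi : ℂ) * Complex.I * m * z)

/-- Jacobi's triple product formula. The infinite product (indexed here
by m ≥ 0, corresponding to the factor of index m+1) converges and equals θ(z). -/
theorem stmt_6 (τ : ℂ) (hτ : 0 < τ.im) (z : ℂ) :
    Multipliable (fun m : ℕ =>
      (1 - Complex.exp (2 * (Real.pi : ℂ) * Complex.I * τ * (m + 1))) *
      (1 - Complex.exp (2 * (Real.pi : ℂ) * Complex.I * ((m : ℂ) * τ + z))) *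
      (1 - Complex.exp (2 * (Real.pi : ℂ) * Complex.I * (((m : ℂ) + 1) * τ - z)))) ∧
    theta τ z = ∏' m : ℕ,
      (1 - Complex.exp (2 * (Real.pi : ℂ) * Complex.I * τ * (m + 1))) *
      (1 - Complex.exp (2 * (Real.pi : ℂ) * Complex.I * ((m : ℂ) * τ + z))) *
      (1 - Complex.exp (2 * (Real.pi : ℂ) * Complex.I * (((m : ℂ) + 1) * τ - z))) := by
  have hw0 : Complex.exp (2 * (Real.pi : ℂ) * Complex.I * τ) ≠ 0 := Complex.exp_ne_zero _
  have hx : Complex.exp (2 * (Real.pi : ℂ) * Complex.I * z) ≠ 0 := Complex.exp_ne_zero _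
  set w : ℂ := Complex.exp (2 * (Real.pi : ℂ) * Complex.I * τ) with hwdef
  set x : ℂ := Complex.exp (2 * (Real.pi : ℂ) * Complex.I * z) with hxdef
  have hw : ‖w‖ < 1 := by
    rw [hwdef, Complex.norm_exp, Real.exp_lt_one_iff]
    have hre : (2 * (Real.pi:ℂ) * Complex.I * τ).re = -(2 * Real.pi * τ.im) := by
      simp [Complex.mul_re, Complex.mul_im, Complex.I_re, Complex.I_im,
        Complex.ofReal_re, Complex.ofReal_im]
      try ring
    rw [hre]
    have := Real.pi_pos
    nlinarith
  have hfun : (fun m : ℕ =>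
      (1 - Complex.exp (2 * (Real.pi : ℂ) * Complex.I * τ * (m + 1))) *
      (1 - Complex.exp (2 * (Real.pi : ℂ) * Complex.I * ((m : ℂ) * τ + z))) *
      (1 - Complex.exp (2 * (Real.pi : ℂ) * Complex.I * (((m : ℂ) + 1) * τ - z))))
      = JTP.fP w x := by
    funext m
    have e1 : Complex.exp (2 * (Real.pi : ℂ) * Complex.I * τ * (m + 1)) = w ^ (m+1) := by
      rw [hwdef, ← Complex.exp_nat_mul]
      congr 1
      push_cast
      ring
    have e2 : Complex.exp (2 * (Real.pi : ℂ) * Complex.I * ((m : ℂ) * τ + z)) = x * w ^ m := by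
      rw [hwdef, hxdef, ← Complex.exp_nat_mul, mul_comm (Complex.exp (2 * (Real.pi : ℂ) * Complex.I * z)), ← Complex.exp_add]
      congr 1
      push_cast
      ring
    have e3 : Complex.exp (2 * (Real.pi : ℂ) * Complex.I * (((m : ℂ) + 1) * τ - z))
        = w ^ (m+1) * x⁻¹ := by
      rw [hwdef, hxdef, ← Complex.exp_nat_mul, ← Complex.exp_neg, ← Complex.exp_add]
      congr 1
      push_cast
      ring
    rw [e1, e2, e3, JTP.fP]
    ring
  have htheta : theta τ z = ∑' n : ℤ, JTP.b w x n := by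
    apply tsum_congr
    intro m
    rw [JTP.b]
    have hc : (2:ℂ) * (JTP.t m : ℂ) = (m:ℂ) * ((m:ℂ) - 1) := by
      exact_mod_cast JTP.two_t m
    have e4 : Complex.exp ((Real.pi:ℂ) * Complex.I * m * (m-1) * τ) = w ^ (JTP.t m) := by
      rw [hwdef, ← Complex.exp_nat_mul]
      congr 1
      linear_combination (-(Real.pi:ℂ) * Complex.I * τ) * hc
    have e5 : Complex.exp (2 * (Real.pi:ℂ) * Complex.I * m * z) = x ^ m := by
      rw [hxdef, ← Complex.exp_int_mul]
      congr 1
      push_cast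
      ring
    rw [e4, e5]
  rw [hfun, htheta]
  have hmain := JTP.main w x hw hw0 hx
  exact ⟨hmain.1, hmain.2⟩
end

section
/- The zero set of the Jacobi theta function θ (with Im(τ) > 0) is exactly the lattice Λ = Z + Zτ, and all zeroes are simple. -/
open Complex

section ThetaZeros

lemma norm_cos_le' (z : ℂ) : ‖Complex.cos z‖ ≤ Real.exp |z.im| := by
  rw [Complex.cos]
  have h := norm_add_le (cexp (z * I)) (cexp (-z * I))
  have h1 : ‖cexp (z * I)‖ = Real.exp (-z.im) := by
    rw [Complex.norm_exp]; congr 1; simp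
  have h2 : ‖cexp (-z * I)‖ = Real.exp z.im := by
    rw [Complex.norm_exp]; congr 1; simp
  have e1 : Real.exp (-z.im) ≤ Real.exp |z.im| := Real.exp_le_exp.mpr (neg_le_abs z.im)
  have e2 : Real.exp z.im ≤ Real.exp |z.im| := Real.exp_le_exp.mpr (le_abs_self z.im)
  calc ‖(cexp (z * I) + cexp (-z * I)) / 2‖ = ‖cexp (z * I) + cexp (-z * I)‖ / 2 := by
        rw [norm_div]; norm_num
    _ ≤ (Real.exp (-z.im) + Real.exp z.im) / 2 := by rw [← h1, ← h2]; linarith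
    _ ≤ Real.exp |z.im| := by linarith

lemma norm_sin_mul_le (x : ℂ) : ∀ n : ℕ,
    ‖Complex.sin ((2 * n + 1) * x)‖ ≤ (2 * n + 1) * Real.exp (2 * n * |x.im|) * ‖Complex.sin x‖ := by
  intro n
  induction n with
  | zero => simp
  | succ m ih =>
    have key : ((2 * ((m : ℂ) + 1) + 1)) * x = (2 * m + 1) * x + 2 * x := by push_cast; ring
    push_cast
    rw [key, Complex.sin_add]
    have hsin2 : ‖Complex.sin (2 * x)‖ ≤ 2 * Real.exp |x.im| * ‖Complex.sin x‖ := by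
      rw [Complex.sin_two_mul]
      calc ‖2 * Complex.sin x * Complex.cos x‖ = 2 * ‖Complex.sin x‖ * ‖Complex.cos x‖ := by
            rw [norm_mul, norm_mul]; norm_num
        _ ≤ 2 * ‖Complex.sin x‖ * Real.exp |x.im| := by
            have := norm_cos_le' x
            nlinarith [norm_nonneg (Complex.sin x)]
        _ = 2 * Real.exp |x.im| * ‖Complex.sin x‖ := by ring
    have him : ∀ c : ℂ, c.im = 0 → 0 ≤ c.re → |(c * x).im| = c.re * |x.im| := by
      intro c hc hc'
      have : (c * x).im = c.re * x.im := by rw [Complex.mul_im, hc]; ring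
      rw [this, abs_mul, _root_.abs_of_nonneg hc']
    have hcosm : ‖Complex.cos ((2 * (m : ℂ) + 1) * x)‖ ≤ Real.exp ((2 * (m : ℝ) + 1) * |x.im|) := by
      have := norm_cos_le' ((2 * (m : ℂ) + 1) * x)
      rw [him (2 * (m : ℂ) + 1) (by simp) (by simp; positivity)] at this
      convert this using 3
      simp
    have hcos2 : ‖Complex.cos (2 * x)‖ ≤ Real.exp (2 * |x.im|) := by
      have := norm_cos_le' (2 * x)
      rwa [him 2 (by simp) (by simp)] at this
    have e1 : Real.exp (2 * (m : ℝ) * |x.im|) * Real.exp (2 * |x.im|)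
        = Real.exp (2 * ((m : ℝ) + 1) * |x.im|) := by
      rw [← Real.exp_add]; congr 1; ring
    have e2 : Real.exp ((2 * (m : ℝ) + 1) * |x.im|) * Real.exp |x.im|
        = Real.exp (2 * ((m : ℝ) + 1) * |x.im|) := by
      rw [← Real.exp_add]; congr 1; ring
    calc ‖Complex.sin ((2 * m + 1) * x) * Complex.cos (2 * x) +
          Complex.cos ((2 * m + 1) * x) * Complex.sin (2 * x)‖
        ≤ ‖Complex.sin ((2 * m + 1) * x)‖ * ‖Complex.cos (2 * x)‖ +
          ‖Complex.cos ((2 * m + 1) * x)‖ * ‖Complex.sin (2 * x)‖ := by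
          refine (norm_add_le _ _).trans ?_; rw [norm_mul, norm_mul]
      _ ≤ ((2 * m + 1) * Real.exp (2 * m * |x.im|) * ‖Complex.sin x‖) * Real.exp (2 * |x.im|) +
          Real.exp ((2 * m + 1) * |x.im|) * (2 * Real.exp |x.im| * ‖Complex.sin x‖) := by
          gcongr <;> positivity
      _ ≤ (2 * ((m : ℝ) + 1) + 1) * Real.exp (2 * ((m : ℝ) + 1) * |x.im|) * ‖Complex.sin x‖ := by
          apply le_of_eq
          linear_combination ((2*(m:ℝ)+1) * ‖Complex.sin x‖) * e1 + (2 * ‖Complex.sin x‖) * e2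

lemma exp_nat_pm1 (n : ℕ) : cexp ((Real.pi : ℂ) * I * n) = (-1 : ℂ) ^ n := by
  rw [show ((Real.pi : ℂ) * I * n) = (n : ℕ) * ((Real.pi : ℂ) * I) by push_cast; ring,
    Complex.exp_nat_mul, Complex.exp_pi_mul_I]

lemma pair_term (τ u : ℂ) (n : ℕ) :
    jacobiTheta₂_term (n : ℤ) ((1 + τ)/2 + u) τ + jacobiTheta₂_term (-((n : ℤ) + 1)) ((1 + τ)/2 + u) τ
    = (2 * I * cexp (-((Real.pi : ℂ) * I) * u)) *
      ((-1 : ℂ) ^ n * cexp ((Real.pi : ℂ) * I * ((n : ℂ) ^ 2 + n) * τ) *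
        Complex.sin ((2 * n + 1) * ((Real.pi : ℂ) * u))) := by
  have h1 : jacobiTheta₂_term (n : ℤ) ((1 + τ)/2 + u) τ
      = cexp ((Real.pi : ℂ) * I * n) * (cexp ((Real.pi : ℂ) * I * ((n : ℂ) ^ 2 + n) * τ) *
        (cexp ((2 * n + 1) * ((Real.pi : ℂ) * u) * I) * cexp (-((Real.pi : ℂ) * I) * u))) := by
    rw [jacobiTheta₂_term, ← Complex.exp_add, ← Complex.exp_add, ← Complex.exp_add]
    congr 1; push_cast; ring
  have h2 : jacobiTheta₂_term (-((n : ℤ) + 1)) ((1 + τ)/2 + u) τ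
      = cexp ((Real.pi : ℂ) * I * (n + 1)) * (cexp ((Real.pi : ℂ) * I * ((n : ℂ) ^ 2 + n) * τ) *
        (cexp (-((2 * n + 1) * ((Real.pi : ℂ) * u)) * I) * cexp (-((Real.pi : ℂ) * I) * u))) *
        cexp (-(((n : ℤ) + 1 : ℤ) : ℂ) * (2 * (Real.pi : ℂ) * I)) := by
    rw [jacobiTheta₂_term, ← Complex.exp_add, ← Complex.exp_add, ← Complex.exp_add,
      ← Complex.exp_add]
    congr 1; push_cast; ring
  have h3 : cexp (-(((n : ℤ) + 1 : ℤ) : ℂ) * (2 * (Real.pi : ℂ) * I)) = 1 := by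
    rw [show (-(((n : ℤ) + 1 : ℤ) : ℂ) * (2 * (Real.pi : ℂ) * I))
        = ((-((n : ℤ) + 1) : ℤ) : ℂ) * (2 * (Real.pi : ℂ) * I) by push_cast; ring,
      Complex.exp_int_mul_two_pi_mul_I]
  have h4 : cexp ((Real.pi : ℂ) * I * ((n : ℂ) + 1)) = -(-1 : ℂ) ^ n := by
    rw [show ((Real.pi : ℂ) * I * ((n : ℂ) + 1)) = (Real.pi : ℂ) * I * n + (Real.pi : ℂ) * I by ring,
      Complex.exp_add, exp_nat_pm1, Complex.exp_pi_mul_I]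
    ring
  rw [h1, h2, h3, mul_one, exp_nat_pm1, h4, Complex.sin]
  ring_nf
  simp only [Complex.I_sq]
  ring_nf

lemma Kfac_ne (u : ℂ) : (2 * I * cexp (-((Real.pi : ℂ) * I) * u)) ≠ 0 := by
  apply mul_ne_zero (mul_ne_zero two_ne_zero I_ne_zero) (Complex.exp_ne_zero _)

lemma theta2_pair_hasSum (τ : ℂ) (hτ : 0 < τ.im) (u : ℂ) :
    HasSum (fun n : ℕ => (-1 : ℂ) ^ n * cexp ((Real.pi : ℂ) * I * ((n : ℂ) ^ 2 + n) * τ) *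
        Complex.sin ((2 * n + 1) * ((Real.pi : ℂ) * u)))
      (jacobiTheta₂ ((1 + τ)/2 + u) τ / (2 * I * cexp (-((Real.pi : ℂ) * I) * u))) := by
  have h := hasSum_jacobiTheta₂_term ((1 + τ)/2 + u) hτ
  have hinj1 : Function.Injective (fun n : ℕ => (n : ℤ)) := fun a b hab => by
    simpa using hab
  have hinj2 : Function.Injective (fun n : ℕ => (-((n : ℤ) + 1))) := fun a b hab => by
    simp only [neg_inj, add_left_inj] at hab; exact_mod_cast hab
  have s₁ : Summable (fun n : ℕ => jacobiTheta₂_term (n : ℤ) ((1 + τ)/2 + u) τ) :=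
    h.summable.comp_injective hinj1
  have s₂ : Summable (fun n : ℕ => jacobiTheta₂_term (-((n : ℤ) + 1)) ((1 + τ)/2 + u) τ) :=
    h.summable.comp_injective hinj2
  obtain ⟨S₁, hS₁⟩ := s₁
  obtain ⟨S₂, hS₂⟩ := s₂
  have hrec : HasSum (fun k : ℤ => jacobiTheta₂_term k ((1 + τ)/2 + u) τ) (S₁ + S₂) := by
    have hh := hS₁.int_rec hS₂
    have : (fun k : ℤ => jacobiTheta₂_term k ((1 + τ)/2 + u) τ)
        = fun k : ℤ => Int.rec (fun n : ℕ => jacobiTheta₂_term (n : ℤ) ((1 + τ)/2 + u) τ)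
            (fun n : ℕ => jacobiTheta₂_term (-((n : ℤ) + 1)) ((1 + τ)/2 + u) τ) k := by
      funext k
      cases k with
      | ofNat n => rfl
      | negSucc n => rfl
    rw [this]; exact hh
  have htot : S₁ + S₂ = jacobiTheta₂ ((1 + τ)/2 + u) τ := hrec.unique h
  have hpairs : HasSum (fun n : ℕ => (2 * I * cexp (-((Real.pi : ℂ) * I) * u)) *
      ((-1 : ℂ) ^ n * cexp ((Real.pi : ℂ) * I * ((n : ℂ) ^ 2 + n) * τ) *
        Complex.sin ((2 * n + 1) * ((Real.pi : ℂ) * u))))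
      (jacobiTheta₂ ((1 + τ)/2 + u) τ) := by
    rw [← htot]
    have := hS₁.add hS₂
    simpa only [pair_term] using this
  have := hpairs.div_const (2 * I * cexp (-((Real.pi : ℂ) * I) * u))
  simpa only [mul_div_cancel_left₀ _ (Kfac_ne u)] using this

lemma norm_cexp_piIc (c : ℝ) (τ : ℂ) :
    ‖cexp ((Real.pi : ℂ) * I * (c : ℂ) * τ)‖ = Real.exp (-(Real.pi * c * τ.im)) := by
  rw [Complex.norm_exp]
  congr 1
  simp [Complex.mul_re, Complex.mul_im]

lemma hasSum_zero_head (a : ℕ → ℂ) (c : ℂ) (ρ : ℝ) (hρ0 : 0 ≤ ρ) (hρ : ρ < 1/2)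
    (ha : HasSum a 0) (h0 : a 0 = c) (hb : ∀ n : ℕ, ‖a (n + 1)‖ ≤ ρ ^ (n + 1) * ‖c‖) :
    c = 0 := by
  by_contra hc
  have hcn : 0 < ‖c‖ := norm_pos_iff.mpr hc
  have hs := ha.summable
  have h1 : (0 : ℂ) = a 0 + ∑' n : ℕ, a (n + 1) := by
    rw [← Summable.tsum_eq_zero_add hs, ha.tsum_eq]
  have hsum_bound : Summable (fun n : ℕ => ρ ^ (n + 1) * ‖c‖) := by
    have : Summable (fun n : ℕ => ρ ^ n) := summable_geometric_of_lt_one hρ0 (by linarith)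
    exact ((this.mul_left ρ).mul_right ‖c‖).congr (fun n => by rw [pow_succ'])
  have hs' : Summable (fun n : ℕ => ‖a (n + 1)‖) := by
    apply Summable.of_nonneg_of_le (fun n => norm_nonneg _) hb hsum_bound
  have h2 : ‖c‖ ≤ ∑' n : ℕ, ρ ^ (n + 1) * ‖c‖ := by
    calc ‖c‖ = ‖a 0‖ := by rw [h0]
      _ = ‖∑' n : ℕ, a (n + 1)‖ := by
          have : a 0 = -∑' n : ℕ, a (n + 1) := eq_neg_of_add_eq_zero_left h1.symm
          rw [this, norm_neg]
      _ ≤ ∑' n : ℕ, ‖a (n + 1)‖ := norm_tsum_le_tsum_norm hs'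
      _ ≤ ∑' n : ℕ, ρ ^ (n + 1) * ‖c‖ := Summable.tsum_le_tsum hb hs' hsum_bound
  have h3 : ∑' n : ℕ, ρ ^ (n + 1) * ‖c‖ = ρ / (1 - ρ) * ‖c‖ := by
    rw [tsum_mul_right]
    congr 1
    have : ∑' n : ℕ, ρ ^ (n + 1) = ρ * ∑' n : ℕ, ρ ^ n := by
      rw [← tsum_mul_left]
      exact tsum_congr fun n => by rw [pow_succ']
    rw [this, tsum_geometric_of_lt_one hρ0 (by linarith)]
    field_simp
  rw [h3] at h2
  have : ρ / (1 - ρ) < 1 := by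
    rw [div_lt_one (by linarith)]; linarith
  nlinarith

lemma hasSum_int_pair {f : ℤ → ℂ} {S : ℂ} (hf : HasSum f S) :
    HasSum (fun n : ℕ => f (n : ℤ) + f (-((n : ℤ) + 1))) S := by
  have hinj1 : Function.Injective (fun n : ℕ => (n : ℤ)) := fun a b hab => by simpa using hab
  have hinj2 : Function.Injective (fun n : ℕ => (-((n : ℤ) + 1))) := fun a b hab => by
    simp only [neg_inj, add_left_inj] at hab; exact_mod_cast hab
  obtain ⟨S₁, hS₁⟩ := hf.summable.comp_injective hinj1
  obtain ⟨S₂, hS₂⟩ := hf.summable.comp_injective hinj2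
  have hrec : HasSum f (S₁ + S₂) := by
    have hh := HasSum.int_rec hS₁ hS₂
    have he : f = fun k : ℤ => Int.rec (fun n : ℕ => (f ∘ fun n : ℕ => (n : ℤ)) n)
        (fun n : ℕ => (f ∘ fun n : ℕ => (-((n : ℤ) + 1))) n) k := by
      funext k
      cases k with
      | ofNat n => rfl
      | negSucc n => rfl
    rw [he]; exact hh
  exact (hrec.unique hf) ▸ (hS₁.add hS₂)

lemma two_mul_add_one_le_three_pow (m : ℕ) : (2 * (m : ℝ) + 1) ≤ 3 ^ m := by
  induction m with
  | zero => norm_num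
  | succ n ih =>
    have : (3:ℝ) ^ (n+1) = 3 * 3 ^ n := by ring
    push_cast
    rw [this]
    nlinarith [pow_nonneg (by norm_num : (0:ℝ) ≤ 3) n]

lemma exp_rho_lt (t : ℝ) (ht : 4/5 ≤ t) : 3 * Real.exp (-(Real.pi * t)) < 1/2 := by
  have h6 : (6 : ℝ) < Real.exp (Real.pi * t) := by
    have h2 : Real.exp (Real.pi * t) = Real.exp (Real.pi * t / 3) ^ 3 := by
      rw [← Real.exp_nat_mul]
      · congr 1; push_cast; ring
    have h3 : Real.pi * t / 3 + 1 ≤ Real.exp (Real.pi * t / 3) := Real.add_one_le_exp _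
    have h4 : (1.83 : ℝ) < 1 + Real.pi * t / 3 := by nlinarith [Real.pi_gt_d6]
    calc (6 : ℝ) < 1.83 ^ 3 := by norm_num
      _ < (1 + Real.pi * t / 3) ^ 3 := by
          exact pow_lt_pow_left₀ h4 (by norm_num) (by norm_num)
      _ ≤ Real.exp (Real.pi * t / 3) ^ 3 := by
          have h5 : (0:ℝ) ≤ 1 + Real.pi * t / 3 := by nlinarith [Real.pi_gt_d6]
          gcongr
          linarith
      _ = Real.exp (Real.pi * t) := h2.symm
  rw [Real.exp_neg]
  have hp := Real.exp_pos (Real.pi * t)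
  rw [mul_comm, inv_eq_one_div, div_mul_eq_mul_div, one_mul,
    div_lt_iff₀ (Real.exp_pos _)]
  nlinarith

lemma g_norm_le (τ u : ℂ) (hτ : 0 < τ.im) (hu : |u.im| ≤ τ.im / 2) (m : ℕ) :
    ‖(-1 : ℂ) ^ m * cexp ((Real.pi : ℂ) * I * ((m : ℂ) ^ 2 + m) * τ) *
        Complex.sin ((2 * m + 1) * ((Real.pi : ℂ) * u))‖
    ≤ (2 * m + 1) * Real.exp (-(Real.pi * (m : ℝ) ^ 2 * τ.im)) * ‖Complex.sin ((Real.pi : ℂ) * u)‖ := by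
  rw [norm_mul, norm_mul]
  have h1 : ‖(-1 : ℂ) ^ m‖ = 1 := by
    rw [norm_pow, norm_neg, norm_one, one_pow]
  have h2 : ‖cexp ((Real.pi : ℂ) * I * ((m : ℂ) ^ 2 + m) * τ)‖
      = Real.exp (-(Real.pi * ((m : ℝ) ^ 2 + m) * τ.im)) := by
    rw [show ((Real.pi : ℂ) * I * ((m : ℂ) ^ 2 + m) * τ)
        = (Real.pi : ℂ) * I * ((((m : ℝ) ^ 2 + m : ℝ)) : ℂ) * τ by push_cast; ring]
    exact norm_cexp_piIc _ τ
  have h3 := norm_sin_mul_le ((Real.pi : ℂ) * u) m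
  have him : |((Real.pi : ℂ) * u).im| = Real.pi * |u.im| := by
    have : ((Real.pi : ℂ) * u).im = Real.pi * u.im := by simp
    rw [this, abs_mul, abs_of_pos Real.pi_pos]
  rw [him] at h3
  have h4 : Real.exp (2 * m * (Real.pi * |u.im|)) ≤ Real.exp (Real.pi * m * τ.im) := by
    apply Real.exp_le_exp.mpr
    have hπ := Real.pi_pos
    nlinarith [mul_le_mul_of_nonneg_left hu (by positivity : (0:ℝ) ≤ 2 * (m:ℝ) * Real.pi)]
  have hsn : (0:ℝ) ≤ ‖Complex.sin ((Real.pi : ℂ) * u)‖ := norm_nonneg _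
  calc ‖(-1 : ℂ) ^ m‖ * ‖cexp ((Real.pi : ℂ) * I * ((m : ℂ) ^ 2 + m) * τ)‖ *
        ‖Complex.sin ((2 * m + 1) * ((Real.pi : ℂ) * u))‖
      = Real.exp (-(Real.pi * ((m : ℝ) ^ 2 + m) * τ.im)) *
        ‖Complex.sin ((2 * m + 1) * ((Real.pi : ℂ) * u))‖ := by rw [h1, h2, one_mul]
    _ ≤ Real.exp (-(Real.pi * ((m : ℝ) ^ 2 + m) * τ.im)) *
        ((2 * m + 1) * Real.exp (2 * m * (Real.pi * |u.im|)) * ‖Complex.sin ((Real.pi : ℂ) * u)‖) := by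
        apply mul_le_mul_of_nonneg_left _ (Real.exp_pos _).le
        convert h3 using 3
    _ ≤ (2 * m + 1) * Real.exp (-(Real.pi * (m : ℝ) ^ 2 * τ.im)) * ‖Complex.sin ((Real.pi : ℂ) * u)‖ := by
        have key : Real.exp (-(Real.pi * ((m : ℝ) ^ 2 + m) * τ.im)) *
            Real.exp (2 * m * (Real.pi * |u.im|))
            ≤ Real.exp (-(Real.pi * (m : ℝ) ^ 2 * τ.im)) := by
          rw [← Real.exp_add]
          apply Real.exp_le_exp.mpr
          have hπ := Real.pi_pos
          nlinarith [mul_le_mul_of_nonneg_left hu (by positivity : (0:ℝ) ≤ 2 * (m:ℝ) * Real.pi)]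
        calc Real.exp (-(Real.pi * ((m : ℝ) ^ 2 + m) * τ.im)) *
              ((2 * m + 1) * Real.exp (2 * m * (Real.pi * |u.im|)) * ‖Complex.sin ((Real.pi : ℂ) * u)‖)
            = (2 * m + 1) * (Real.exp (-(Real.pi * ((m : ℝ) ^ 2 + m) * τ.im)) *
              Real.exp (2 * m * (Real.pi * |u.im|))) * ‖Complex.sin ((Real.pi : ℂ) * u)‖ := by ring
          _ ≤ (2 * m + 1) * Real.exp (-(Real.pi * (m : ℝ) ^ 2 * τ.im)) * ‖Complex.sin ((Real.pi : ℂ) * u)‖ := by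
              apply mul_le_mul_of_nonneg_right (mul_le_mul_of_nonneg_left key (by positivity)) hsn

lemma base_zero_iff (τ : ℂ) (hτ : 0 < τ.im) (hb : 4/5 ≤ τ.im) (u : ℂ) (hu : |u.im| ≤ τ.im / 2) :
    jacobiTheta₂ ((1 + τ)/2 + u) τ = 0 ↔ ∃ k : ℤ, u = (k : ℂ) := by
  set g : ℕ → ℂ := fun n => (-1 : ℂ) ^ n * cexp ((Real.pi : ℂ) * I * ((n : ℂ) ^ 2 + n) * τ) *
      Complex.sin ((2 * n + 1) * ((Real.pi : ℂ) * u)) with hg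
  have hG := theta2_pair_hasSum τ hτ u
  constructor
  · intro h0
    rw [h0, zero_div] at hG
    have hρ0 : (0:ℝ) ≤ 3 * Real.exp (-(Real.pi * τ.im)) := by positivity
    have hρ : 3 * Real.exp (-(Real.pi * τ.im)) < 1/2 := exp_rho_lt τ.im hb
    have hg0 : g 0 = Complex.sin ((Real.pi : ℂ) * u) := by
      rw [hg]
      norm_num
    have hsin0 : Complex.sin ((Real.pi : ℂ) * u) = 0 := by
      apply hasSum_zero_head g _ _ hρ0 hρ hG hg0
      intro n
      calc ‖g (n + 1)‖ ≤ (2 * (n + 1 : ℕ) + 1) * Real.exp (-(Real.pi * ((n + 1 : ℕ) : ℝ) ^ 2 * τ.im)) *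
            ‖Complex.sin ((Real.pi : ℂ) * u)‖ := g_norm_le τ u hτ hu (n + 1)
        _ ≤ (3 * Real.exp (-(Real.pi * τ.im))) ^ (n + 1) * ‖Complex.sin ((Real.pi : ℂ) * u)‖ := by
            apply mul_le_mul_of_nonneg_right _ (norm_nonneg _)
            have e1 : (3 * Real.exp (-(Real.pi * τ.im))) ^ (n + 1)
                = 3 ^ (n+1) * Real.exp (-(Real.pi * ((n+1 : ℕ) : ℝ) * τ.im)) := by
              rw [mul_pow, ← Real.exp_nat_mul]
              congr 2
              push_cast; ring
            rw [e1]
            have e2 : Real.exp (-(Real.pi * ((n + 1 : ℕ) : ℝ) ^ 2 * τ.im))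
                ≤ Real.exp (-(Real.pi * ((n+1 : ℕ) : ℝ) * τ.im)) := by
              apply Real.exp_le_exp.mpr
              have hπ := Real.pi_pos
              have hx : ((n+1 : ℕ) : ℝ) ≤ ((n+1 : ℕ) : ℝ) ^ 2 := by push_cast; nlinarith [Nat.cast_nonneg (α := ℝ) n]
              nlinarith [mul_le_mul_of_nonneg_right (mul_le_mul_of_nonneg_left hx hπ.le) hτ.le]
            have e3 := two_mul_add_one_le_three_pow (n+1)
            exact mul_le_mul e3 e2 (Real.exp_pos _).le (by positivity)
    rw [Complex.sin_eq_zero_iff] at hsin0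
    obtain ⟨k, hk⟩ := hsin0
    refine ⟨k, ?_⟩
    have hπ : ((Real.pi : ℂ)) ≠ 0 := by
      simpa using Real.pi_ne_zero
    have h5 : ((Real.pi : ℂ)) * u = (Real.pi : ℂ) * (k : ℂ) := by rw [hk]; ring
    exact mul_left_cancel₀ hπ h5
  · rintro ⟨k, rfl⟩
    have hzero : ∀ n : ℕ, g n = 0 := by
      intro n
      rw [hg]
      have : ((2 * n + 1 : ℂ)) * ((Real.pi : ℂ) * (k : ℂ)) = (((2 * n + 1) * k : ℤ) : ℂ) * (Real.pi : ℂ) := by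
        push_cast; ring
      simp only [this, Complex.sin_int_mul_pi, mul_zero]
    have : HasSum g 0 := by
      rw [funext hzero]; exact hasSum_zero
    have h := this.unique hG
    rw [eq_comm, div_eq_zero_iff] at h
    rcases h with h | h
    · exact h
    · exact absurd h (Kfac_ne _)

lemma exp_nat_pm1' (n : ℕ) : cexp ((Real.pi : ℂ) * I * n) = (-1 : ℂ) ^ n := by
  rw [show ((Real.pi : ℂ) * I * n) = (n : ℕ) * ((Real.pi : ℂ) * I) by push_cast; ring,
    Complex.exp_nat_mul, Complex.exp_pi_mul_I]

lemma term_z0_pos (τ : ℂ) (n : ℕ) : jacobiTheta₂_term (n : ℤ) ((1 + τ)/2) τ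
    = (-1 : ℂ) ^ n * cexp ((Real.pi : ℂ) * I * ((n : ℂ) ^ 2 + n) * τ) := by
  rw [jacobiTheta₂_term, ← exp_nat_pm1' n, ← Complex.exp_add]
  congr 1; push_cast; ring

lemma term_z0_neg (τ : ℂ) (n : ℕ) : jacobiTheta₂_term (-((n : ℤ) + 1)) ((1 + τ)/2) τ
    = -((-1 : ℂ) ^ n * cexp ((Real.pi : ℂ) * I * ((n : ℂ) ^ 2 + n) * τ)) := by
  have h3 : cexp ((-((n : ℤ) + 1) : ℤ) * (2 * (Real.pi : ℂ) * I)) = 1 :=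
    Complex.exp_int_mul_two_pi_mul_I _
  have h4 : cexp ((Real.pi : ℂ) * I * ((n : ℂ) + 1)) = -(-1 : ℂ) ^ n := by
    rw [show ((Real.pi : ℂ) * I * ((n : ℂ) + 1)) = (Real.pi : ℂ) * I * n + (Real.pi : ℂ) * I by ring,
      Complex.exp_add, exp_nat_pm1', Complex.exp_pi_mul_I]
    ring
  have key : jacobiTheta₂_term (-((n : ℤ) + 1)) ((1 + τ)/2) τ
      = cexp ((Real.pi : ℂ) * I * ((n : ℂ) + 1)) * cexp ((Real.pi : ℂ) * I * ((n : ℂ) ^ 2 + n) * τ) *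
        cexp (((-((n : ℤ) + 1) : ℤ) : ℂ) * (2 * (Real.pi : ℂ) * I)) := by
    rw [jacobiTheta₂_term, ← Complex.exp_add, ← Complex.exp_add]
    congr 1; push_cast; ring
  rw [key, h3, mul_one, h4]
  ring

lemma base_deriv_ne (τ : ℂ) (hτ : 0 < τ.im) (hb : 4/5 ≤ τ.im) :
    jacobiTheta₂' ((1 + τ)/2) τ ≠ 0 := by
  intro h0
  have hterm := hasSum_jacobiTheta₂'_term ((1 + τ)/2) hτ
  have hpair := hasSum_int_pair hterm
  have hval : ∀ n : ℕ, jacobiTheta₂'_term (n : ℤ) ((1 + τ)/2) τ +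
      jacobiTheta₂'_term (-((n : ℤ) + 1)) ((1 + τ)/2) τ
      = 2 * (Real.pi : ℂ) * I * (2 * n + 1) * ((-1 : ℂ) ^ n *
          cexp ((Real.pi : ℂ) * I * ((n : ℂ) ^ 2 + n) * τ)) := by
    intro n
    rw [jacobiTheta₂'_term, jacobiTheta₂'_term, term_z0_pos, term_z0_neg]
    push_cast
    ring
  rw [funext hval, h0] at hpair
  set a : ℕ → ℂ := fun n => 2 * (Real.pi : ℂ) * I * (2 * n + 1) * ((-1 : ℂ) ^ n *
      cexp ((Real.pi : ℂ) * I * ((n : ℂ) ^ 2 + n) * τ)) with ha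
  have ha0 : a 0 = 2 * (Real.pi : ℂ) * I := by
    rw [ha]; norm_num
  have hρ0 : (0:ℝ) ≤ 3 * Real.exp (-(Real.pi * τ.im)) := by positivity
  have hρ : 3 * Real.exp (-(Real.pi * τ.im)) < 1/2 := exp_rho_lt τ.im hb
  have hcontr : (2 * (Real.pi : ℂ) * I) = 0 := by
    apply hasSum_zero_head a _ _ hρ0 hρ hpair ha0
    intro n
    have hnorm : ‖a (n + 1)‖ = 2 * Real.pi * (2 * ((n:ℝ) + 1) + 1) *
        Real.exp (-(Real.pi * (((n:ℝ) + 1) ^ 2 + ((n:ℝ) + 1)) * τ.im)) := by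
      rw [ha]
      simp only [norm_mul]
      have e0 : ‖(2 : ℂ)‖ = 2 := by norm_num
      have e1 : ‖((Real.pi : ℝ) : ℂ)‖ = Real.pi := by
        rw [Complex.norm_real, Real.norm_eq_abs, abs_of_pos Real.pi_pos]
      have e2 : ‖I‖ = 1 := by simp
      have e3 : ‖(2 * ((n : ℕ) + 1 : ℕ) + 1 : ℂ)‖ = 2 * ((n:ℝ) + 1) + 1 := by
        rw [show (2 * ((n : ℕ) + 1 : ℕ) + 1 : ℂ) = (((2 * ((n:ℝ) + 1) + 1 : ℝ)) : ℂ) by push_cast; ring,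
          Complex.norm_real, Real.norm_eq_abs, abs_of_pos (by positivity)]
      have e4 : ‖(-1 : ℂ) ^ (n + 1)‖ = 1 := by
        rw [norm_pow, norm_neg, norm_one, one_pow]
      have e5 : ‖cexp ((Real.pi : ℂ) * I * (((n + 1 : ℕ) : ℂ) ^ 2 + ((n + 1 : ℕ) : ℂ)) * τ)‖
          = Real.exp (-(Real.pi * (((n:ℝ) + 1) ^ 2 + ((n:ℝ) + 1)) * τ.im)) := by
        rw [show ((Real.pi : ℂ) * I * (((n + 1 : ℕ) : ℂ) ^ 2 + ((n + 1 : ℕ) : ℂ)) * τ)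
            = (Real.pi : ℂ) * I * ((((((n:ℝ) + 1) ^ 2 + ((n:ℝ) + 1)) : ℝ)) : ℂ) * τ by push_cast; ring]
        exact norm_cexp_piIc _ τ
      push_cast
      push_cast at e3 e5
      rw [e0, e1, e2, e3, e4, e5]
      ring
    rw [hnorm]
    have hc : ‖(2 * (Real.pi : ℂ) * I)‖ = 2 * Real.pi := by
      simp [norm_mul, abs_of_pos Real.pi_pos]
    rw [hc]
    have e6 : (3 * Real.exp (-(Real.pi * τ.im))) ^ (n + 1)
        = 3 ^ (n+1) * Real.exp (-(Real.pi * ((n:ℝ) + 1) * τ.im)) := by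
      rw [mul_pow, ← Real.exp_nat_mul]
      congr 2
      push_cast; ring
    rw [e6]
    have e7 : Real.exp (-(Real.pi * (((n:ℝ) + 1) ^ 2 + ((n:ℝ) + 1)) * τ.im))
        ≤ Real.exp (-(Real.pi * ((n:ℝ) + 1) * τ.im)) := by
      apply Real.exp_le_exp.mpr
      have hπ := Real.pi_pos
      nlinarith [Nat.cast_nonneg (α := ℝ) n, mul_le_mul_of_nonneg_right
        (mul_le_mul_of_nonneg_left (by nlinarith [Nat.cast_nonneg (α := ℝ) n] :
          ((n:ℝ) + 1) ≤ ((n:ℝ) + 1) ^ 2 + ((n:ℝ) + 1)) hπ.le) hτ.le]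
    have e8 := two_mul_add_one_le_three_pow (n+1)
    push_cast at e8
    calc 2 * Real.pi * (2 * ((n:ℝ) + 1) + 1) *
          Real.exp (-(Real.pi * (((n:ℝ) + 1) ^ 2 + ((n:ℝ) + 1)) * τ.im))
        ≤ 2 * Real.pi * (3 ^ (n+1) * Real.exp (-(Real.pi * ((n:ℝ) + 1) * τ.im))) := by
          have := mul_le_mul e8 e7 (Real.exp_pos _).le (by positivity)
          nlinarith [Real.pi_pos]
      _ = 3 ^ (n + 1) * Real.exp (-(Real.pi * ((n:ℝ) + 1) * τ.im)) * (2 * Real.pi) := by ring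
  exact (mul_ne_zero (mul_ne_zero two_ne_zero
    (by simpa using Real.pi_ne_zero : ((Real.pi : ℂ)) ≠ 0)) I_ne_zero) hcontr

lemma theta2_add_int (τ z : ℂ) (k : ℤ) : jacobiTheta₂ (z + k) τ = jacobiTheta₂ z τ := by
  induction k using Int.induction_on with
  | zero => simp
  | succ i ih =>
    have : z + ((i : ℤ) + 1 : ℤ) = (z + (i : ℤ)) + 1 := by push_cast; ring
    rw [this, jacobiTheta₂_add_left, ih]
  | pred i ih =>
    have : z + (-(i : ℤ) : ℤ) = (z + (-(i : ℤ) - 1 : ℤ)) + 1 := by push_cast; ring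
    rw [this, jacobiTheta₂_add_left] at ih
    rw [show ((-(i : ℤ) - 1 : ℤ) : ℂ) = ((-((i : ℤ)) - 1 : ℤ) : ℂ) by norm_num] at ih ⊢
    exact ih

lemma theta2'_add_int (τ z : ℂ) (k : ℤ) : jacobiTheta₂' (z + k) τ = jacobiTheta₂' z τ := by
  induction k using Int.induction_on with
  | zero => simp
  | succ i ih =>
    have : z + ((i : ℤ) + 1 : ℤ) = (z + (i : ℤ)) + 1 := by push_cast; ring
    rw [this, jacobiTheta₂'_add_left, ih]
  | pred i ih =>
    have : z + (-(i : ℤ) : ℤ) = (z + (-(i : ℤ) - 1 : ℤ)) + 1 := by push_cast; ring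
    rw [this, jacobiTheta₂'_add_left] at ih
    exact ih

lemma theta2_quasi (τ z : ℂ) (n : ℤ) :
    jacobiTheta₂ (z + n * τ) τ
      = cexp (-(Real.pi : ℂ) * I * ((n : ℂ) ^ 2 * τ + 2 * n * z)) * jacobiTheta₂ z τ := by
  induction n using Int.induction_on with
  | zero => simp
  | succ i ih =>
    have h1 : z + (((i : ℤ) + 1 : ℤ) : ℂ) * τ = (z + (i : ℤ) * τ) + τ := by push_cast; ring
    rw [h1, jacobiTheta₂_add_left', ih, ← mul_assoc, ← Complex.exp_add]
    congr 2
    push_cast; ring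
  | pred i ih =>
    have h1 : (z + ((-(i : ℤ) - 1 : ℤ) : ℂ) * τ) + τ = z + ((-(i : ℤ) : ℤ) : ℂ) * τ := by
      push_cast; ring
    have hE := jacobiTheta₂_add_left' (z + ((-(i : ℤ) - 1 : ℤ) : ℂ) * τ) τ
    rw [h1, ih] at hE
    have h2 : jacobiTheta₂ (z + ((-(i : ℤ) - 1 : ℤ) : ℂ) * τ) τ
        = cexp ((Real.pi : ℂ) * I * (τ + 2 * (z + ((-(i : ℤ) - 1 : ℤ) : ℂ) * τ))) *
          (cexp (-(Real.pi : ℂ) * I * (((-(i : ℤ) : ℤ) : ℂ) ^ 2 * τ + 2 * ((-(i : ℤ) : ℤ) : ℂ) * z)) *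
            jacobiTheta₂ z τ) := by
      have hfac : cexp ((Real.pi : ℂ) * I * (τ + 2 * (z + ((-(i : ℤ) - 1 : ℤ) : ℂ) * τ))) *
          cexp (-(Real.pi : ℂ) * I * (τ + 2 * (z + ((-(i : ℤ) - 1 : ℤ) : ℂ) * τ))) = 1 := by
        rw [← Complex.exp_add,
          show ((Real.pi : ℂ) * I * (τ + 2 * (z + ((-(i : ℤ) - 1 : ℤ) : ℂ) * τ))
            + -(Real.pi : ℂ) * I * (τ + 2 * (z + ((-(i : ℤ) - 1 : ℤ) : ℂ) * τ))) = 0 by ring,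
          Complex.exp_zero]
      linear_combination (-(cexp ((Real.pi : ℂ) * I * (τ + 2 * (z + ((-(i : ℤ) - 1 : ℤ) : ℂ) * τ))))) * hE
        - jacobiTheta₂ (z + ((-(i : ℤ) - 1 : ℤ) : ℂ) * τ) τ * hfac
    rw [h2, ← mul_assoc, ← Complex.exp_add]
    congr 2
    push_cast; ring

lemma theta2'_quasi (τ z : ℂ) (n : ℤ) :
    jacobiTheta₂' (z + n * τ) τ
      = cexp (-(Real.pi : ℂ) * I * ((n : ℂ) ^ 2 * τ + 2 * n * z)) *
        (jacobiTheta₂' z τ - 2 * (Real.pi : ℂ) * I * n * jacobiTheta₂ z τ) := by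
  induction n using Int.induction_on with
  | zero => simp
  | succ i ih =>
    have h1 : z + (((i : ℤ) + 1 : ℤ) : ℂ) * τ = (z + (i : ℤ) * τ) + τ := by push_cast; ring
    rw [h1, jacobiTheta₂'_add_left', ih, theta2_quasi τ z (i : ℤ)]
    rw [show cexp (-(Real.pi : ℂ) * I * (((i : ℤ) : ℂ) ^ 2 * τ + 2 * ((i : ℤ) : ℂ) * z)) *
          (jacobiTheta₂' z τ - 2 * (Real.pi : ℂ) * I * ((i : ℤ) : ℂ) * jacobiTheta₂ z τ) -
        2 * (Real.pi : ℂ) * I *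
          (cexp (-(Real.pi : ℂ) * I * (((i : ℤ) : ℂ) ^ 2 * τ + 2 * ((i : ℤ) : ℂ) * z)) * jacobiTheta₂ z τ)
        = cexp (-(Real.pi : ℂ) * I * (((i : ℤ) : ℂ) ^ 2 * τ + 2 * ((i : ℤ) : ℂ) * z)) *
          (jacobiTheta₂' z τ - 2 * (Real.pi : ℂ) * I * (((i : ℤ) : ℂ) + 1) * jacobiTheta₂ z τ) from by ring]
    rw [← mul_assoc, ← Complex.exp_add]
    congr 2
    · push_cast; ring
    · push_cast; ring
  | pred i ih =>
    have h1 : (z + ((-(i : ℤ) - 1 : ℤ) : ℂ) * τ) + τ = z + ((-(i : ℤ) : ℤ) : ℂ) * τ := by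
      push_cast; ring
    set w := z + ((-(i : ℤ) - 1 : ℤ) : ℂ) * τ with hw
    have hE := jacobiTheta₂'_add_left' w τ
    rw [h1, ih] at hE
    -- hE : cexp(-πI((-i)²τ+2(-i)z)) * (θ' - 2πI(-i)θ) = cexp (-πI(τ+2w)) * (θ₂' w - 2πI θ₂ w)
    have hw0 : jacobiTheta₂ w τ
        = cexp (-(Real.pi : ℂ) * I * (((-(i : ℤ) - 1 : ℤ) : ℂ) ^ 2 * τ + 2 * ((-(i : ℤ) - 1 : ℤ) : ℂ) * z)) *
          jacobiTheta₂ z τ := theta2_quasi τ z _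
    have hfac : cexp ((Real.pi : ℂ) * I * (τ + 2 * w)) * cexp (-(Real.pi : ℂ) * I * (τ + 2 * w)) = 1 := by
      rw [← Complex.exp_add]; simp [show ((Real.pi : ℂ) * I * (τ + 2 * w) + -(Real.pi : ℂ) * I * (τ + 2 * w)) = 0 from by ring]
    have key : jacobiTheta₂' w τ
        = cexp ((Real.pi : ℂ) * I * (τ + 2 * w)) *
            (cexp (-(Real.pi : ℂ) * I * (((-(i : ℤ) : ℤ) : ℂ) ^ 2 * τ + 2 * ((-(i : ℤ) : ℤ) : ℂ) * z)) *
              (jacobiTheta₂' z τ - 2 * (Real.pi : ℂ) * I * ((-(i : ℤ) : ℤ) : ℂ) * jacobiTheta₂ z τ)) +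
          2 * (Real.pi : ℂ) * I * jacobiTheta₂ w τ := by
      linear_combination (-(cexp ((Real.pi : ℂ) * I * (τ + 2 * w)))) * hE
        - (jacobiTheta₂' w τ - 2 * (Real.pi : ℂ) * I * jacobiTheta₂ w τ) * hfac
    rw [key, hw0, ← mul_assoc, ← Complex.exp_add]
    rw [show (2 : ℂ) * (Real.pi : ℂ) * I *
        (cexp (-(Real.pi : ℂ) * I * (((-(i : ℤ) - 1 : ℤ) : ℂ) ^ 2 * τ + 2 * ((-(i : ℤ) - 1 : ℤ) : ℂ) * z)) *
          jacobiTheta₂ z τ)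
        = cexp (-(Real.pi : ℂ) * I * (((-(i : ℤ) - 1 : ℤ) : ℂ) ^ 2 * τ + 2 * ((-(i : ℤ) - 1 : ℤ) : ℂ) * z)) *
          (2 * (Real.pi : ℂ) * I * jacobiTheta₂ z τ) from by ring]
    have hexp : cexp ((Real.pi : ℂ) * I * (τ + 2 * w) +
          -(Real.pi : ℂ) * I * (((-(i : ℤ) : ℤ) : ℂ) ^ 2 * τ + 2 * ((-(i : ℤ) : ℤ) : ℂ) * z))
        = cexp (-(Real.pi : ℂ) * I * (((-(i : ℤ) - 1 : ℤ) : ℂ) ^ 2 * τ + 2 * ((-(i : ℤ) - 1 : ℤ) : ℂ) * z)) := by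
      congr 1
      rw [hw]
      push_cast; ring
    rw [hexp, ← mul_add]
    congr 1
    push_cast; ring

/-- the full zero-set and simplicity property -/
def Qprop (τ : ℂ) : Prop :=
  (∀ z : ℂ, jacobiTheta₂ z τ = 0 ↔ ∃ m n : ℤ, z = (1 + τ)/2 + m + n * τ) ∧
  (∀ z : ℂ, jacobiTheta₂ z τ = 0 → jacobiTheta₂' z τ ≠ 0)

lemma Qbase (τ : ℂ) (hτ : 0 < τ.im) (hb : 4/5 ≤ τ.im) : Qprop τ := by
  have hz0 : jacobiTheta₂ ((1 + τ)/2) τ = 0 := by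
    have := (base_zero_iff τ hτ hb 0 (by simpa using (by positivity : (0:ℝ) ≤ τ.im / 2))).mpr
      ⟨0, by norm_num⟩
    simpa using this
  have hdecomp : ∀ z : ℂ, jacobiTheta₂ z τ = 0 → ∃ m n : ℤ, z = (1 + τ)/2 + m + n * τ := by
    intro z hz
    set n : ℤ := round ((z - (1 + τ)/2).im / τ.im) with hn
    set u : ℂ := z - (1 + τ)/2 - n * τ with hu
    have hzdec : z = ((1 + τ)/2 + u) + n * τ := by rw [hu]; ring
    have him : |u.im| ≤ τ.im / 2 := by
      have h1 : u.im = (z - (1 + τ)/2).im - n * τ.im := by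
        rw [hu]
        simp [Complex.sub_im, Complex.mul_im]
      have h2 : |(z - (1 + τ)/2).im / τ.im - n| ≤ 1/2 := abs_sub_round _
      have h3 : ((z - (1 + τ)/2).im / τ.im - n) * τ.im = (z - (1 + τ)/2).im - n * τ.im := by
        field_simp
      rw [h1, ← h3, abs_mul, abs_of_pos hτ]
      calc |(z - (1 + τ)/2).im / τ.im - ↑n| * τ.im ≤ 1/2 * τ.im := by
            apply mul_le_mul_of_nonneg_right h2 hτ.le
        _ = τ.im / 2 := by ring
    have hq := theta2_quasi τ ((1 + τ)/2 + u) n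
    rw [← hzdec] at hq
    rw [hq] at hz
    have hu0 : jacobiTheta₂ ((1 + τ)/2 + u) τ = 0 := by
      rcases mul_eq_zero.mp hz with h | h
      · exact absurd h (Complex.exp_ne_zero _)
      · exact h
    obtain ⟨k, hk⟩ := (base_zero_iff τ hτ hb u him).mp hu0
    exact ⟨k, n, by rw [hzdec, hk]⟩
  constructor
  · intro z
    constructor
    · exact hdecomp z
    · rintro ⟨m, n, rfl⟩
      have h1 : (1 + τ)/2 + (m : ℂ) + (n : ℂ) * τ = (((1 + τ)/2 + (m : ℂ)) + (n : ℂ) * τ) := by ring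
      rw [h1, theta2_quasi, theta2_add_int, hz0, mul_zero]
  · intro z hz
    obtain ⟨m, n, rfl⟩ := hdecomp z hz
    have h1 : (1 + τ)/2 + (m : ℂ) + (n : ℂ) * τ = (((1 + τ)/2 + (m : ℂ)) + (n : ℂ) * τ) := by ring
    rw [h1, theta2'_quasi, theta2'_add_int, theta2_add_int, hz0, mul_zero, sub_zero]
    exact mul_ne_zero (Complex.exp_ne_zero _) (base_deriv_ne τ hτ hb)

lemma even_sq_sub (n : ℤ) : ∃ r : ℤ, (n : ℂ) ^ 2 - n = 2 * r := by
  rcases Int.even_or_odd n with ⟨k, hk⟩ | ⟨k, hk⟩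
  · exact ⟨2*k*k - k, by subst hk; push_cast; ring⟩
  · exact ⟨2*k*k + k, by subst hk; push_cast; ring⟩

lemma theta2_term_T (τ z : ℂ) (n : ℤ) :
    jacobiTheta₂_term n z (τ + 1) = jacobiTheta₂_term n (z + 1/2) τ := by
  obtain ⟨r, hr⟩ := even_sq_sub n
  rw [jacobiTheta₂_term, jacobiTheta₂_term,
    show (2 * (Real.pi : ℂ) * I * n * z + (Real.pi : ℂ) * I * n ^ 2 * (τ + 1))
      = (2 * (Real.pi : ℂ) * I * n * (z + 1/2) + (Real.pi : ℂ) * I * n ^ 2 * τ)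
        + ((n:ℂ)^2 - n) * ((Real.pi : ℂ) * I) from by push_cast; ring,
    hr, Complex.exp_add,
    show (2 * (r:ℂ)) * ((Real.pi : ℂ) * I) = (r : ℂ) * (2 * (Real.pi : ℂ) * I) from by ring,
    Complex.exp_int_mul_two_pi_mul_I, mul_one]

lemma theta2_T (τ z : ℂ) : jacobiTheta₂ z (τ + 1) = jacobiTheta₂ (z + 1/2) τ :=
  tsum_congr fun n => theta2_term_T τ z n

lemma theta2'_T (τ z : ℂ) : jacobiTheta₂' z (τ + 1) = jacobiTheta₂' (z + 1/2) τ :=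
  tsum_congr fun n => by rw [jacobiTheta₂'_term, jacobiTheta₂'_term, theta2_term_T]

lemma QT (τ : ℂ) : Qprop τ ↔ Qprop (τ + 1) := by
  constructor
  · rintro ⟨h1, h2⟩
    constructor
    · intro z
      rw [theta2_T, h1 (z + 1/2)]
      constructor
      · rintro ⟨m, n, hz⟩
        exact ⟨m - 1 - n, n, by push_cast; push_cast at hz; linear_combination hz⟩
      · rintro ⟨m, n, hz⟩
        exact ⟨m + n + 1, n, by push_cast; push_cast at hz; linear_combination hz⟩
    · intro z hz
      rw [theta2_T] at hz
      rw [theta2'_T]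
      exact h2 _ hz
  · rintro ⟨h1, h2⟩
    constructor
    · intro z
      have e : z = (z - 1/2) + 1/2 := by ring
      rw [show jacobiTheta₂ z τ = jacobiTheta₂ ((z - 1/2) + 1/2) τ from by rw [← e],
        ← theta2_T, h1 (z - 1/2)]
      constructor
      · rintro ⟨m, n, hz⟩
        exact ⟨m + n + 1, n, by push_cast; push_cast at hz; linear_combination hz⟩
      · rintro ⟨m, n, hz⟩
        exact ⟨m - 1 - n, n, by push_cast; push_cast at hz; linear_combination hz⟩
    · intro z hz
      have e : z = (z - 1/2) + 1/2 := by ring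
      rw [show jacobiTheta₂ z τ = jacobiTheta₂ ((z - 1/2) + 1/2) τ from by rw [← e],
        ← theta2_T] at hz
      rw [show jacobiTheta₂' z τ = jacobiTheta₂' ((z - 1/2) + 1/2) τ from by rw [← e],
        ← theta2'_T]
      exact h2 _ hz

lemma Qint (τ : ℂ) (k : ℤ) : Qprop τ ↔ Qprop (τ + k) := by
  induction k using Int.induction_on with
  | zero => simp
  | succ i ih =>
    have e1 : (((i : ℤ) + 1 : ℤ) : ℂ) = ((i : ℤ) : ℂ) + 1 := by push_cast; ring
    rw [e1, show τ + (((i : ℤ) : ℂ) + 1) = (τ + ((i : ℤ) : ℂ)) + 1 from by ring]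
    exact ih.trans (QT _)
  | pred i ih =>
    have e1 : ((-(i : ℤ) - 1 : ℤ) : ℂ) = ((-(i : ℤ) : ℤ) : ℂ) - 1 := by push_cast; ring
    have hQ := QT (τ + ((-(i : ℤ) : ℤ) : ℂ) - 1)
    rw [show τ + ((-(i : ℤ) : ℤ) : ℂ) - 1 + 1 = τ + ((-(i : ℤ) : ℤ) : ℂ) from by ring] at hQ
    rw [e1, show τ + (((-(i : ℤ) : ℤ) : ℂ) - 1) = τ + ((-(i : ℤ) : ℤ) : ℂ) - 1 from by ring]
    exact ih.trans hQ.symm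

lemma QS (τ : ℂ) (hτ : 0 < τ.im) (h : Qprop (-1/τ)) : Qprop τ := by
  have hτ0 : τ ≠ 0 := by
    intro h0
    rw [h0] at hτ
    simp at hτ
  have hC : ∀ z : ℂ, (1 / (-I * τ) ^ (1 / 2 : ℂ) * cexp (-(Real.pi : ℂ) * I * z ^ 2 / τ)) ≠ 0 := by
    intro z
    apply mul_ne_zero
    · rw [one_div, ne_eq, inv_eq_zero]
      rw [Complex.cpow_eq_zero_iff]
      push_neg
      intro hh
      exact absurd hh (mul_ne_zero (neg_ne_zero.mpr I_ne_zero) hτ0)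
    · exact Complex.exp_ne_zero _
  obtain ⟨h1, h2⟩ := h
  constructor
  · intro z
    rw [jacobiTheta₂_functional_equation z τ]
    rw [mul_eq_zero]
    have : ¬ (1 / (-I * τ) ^ (1 / 2 : ℂ) * cexp (-(Real.pi : ℂ) * I * z ^ 2 / τ)) = 0 := hC z
    constructor
    · intro hh
      rcases hh with hh | hh
      · exact absurd hh (hC z)
      · rw [h1 (z/τ)] at hh
        obtain ⟨m, n, hz⟩ := hh
        refine ⟨-n - 1, m, ?_⟩
        have h3 := congrArg (fun w => w * τ) hz
        rw [div_mul_cancel₀ z hτ0] at h3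
        rw [h3]
        push_cast
        field_simp
        ring
    · intro hh
      right
      rw [h1 (z/τ)]
      obtain ⟨m, n, hz⟩ := hh
      refine ⟨n, -m - 1, ?_⟩
      rw [hz]
      push_cast
      field_simp
      ring
  · intro z hz
    have hfe := jacobiTheta₂_functional_equation z τ
    rw [hz] at hfe
    have hz' : jacobiTheta₂ (z/τ) (-1/τ) = 0 := by
      rcases mul_eq_zero.mp hfe.symm with hh | hh
      · exact absurd hh (hC z)
      · exact hh
    have hd := jacobiTheta₂'_functional_equation z τ
    rw [hz', mul_zero, sub_zero] at hd
    rw [hd]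
    apply mul_ne_zero
    · apply div_ne_zero (hC z) hτ0
    · exact h2 _ hz'


lemma Qreduce (τ : ℂ) (hτ : 0 < τ.im) (hlt : τ.im < 4/5) :
    ∃ σ : ℂ, 0 < σ.im ∧ τ.im / (1/4 + τ.im^2) ≤ σ.im ∧ (Qprop σ → Qprop τ) := by
  set k : ℤ := round τ.re with hk
  set τ' : ℂ := τ - k with hτ'
  have him : τ'.im = τ.im := by rw [hτ']; simp
  have hre : |τ'.re| ≤ 1/2 := by
    rw [hτ']
    simp only [Complex.sub_re, Complex.intCast_re]
    exact abs_sub_round τ.re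
  have hτ'pos : 0 < τ'.im := him ▸ hτ
  have hns_pos : 0 < Complex.normSq τ' := by
    apply Complex.normSq_pos.mpr
    intro h0
    rw [h0] at hτ'pos
    simp at hτ'pos
  have hns_le : Complex.normSq τ' ≤ 1/4 + τ.im^2 := by
    rw [Complex.normSq_apply, ← him]
    nlinarith [abs_le.mp hre, sq_nonneg τ'.re]
  have hτ'0 : τ' ≠ 0 := by
    intro h0
    rw [h0] at hτ'pos
    simp at hτ'pos
  refine ⟨-1/τ', ?_, ?_, ?_⟩
  · rw [show (-1/τ' : ℂ) = -(τ'⁻¹) from by ring, Complex.neg_im, Complex.inv_im, him,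
      neg_div, neg_neg]
    exact div_pos hτ hns_pos
  · rw [show (-1/τ' : ℂ) = -(τ'⁻¹) from by ring, Complex.neg_im, Complex.inv_im, him]
    rw [neg_div, neg_neg]
    apply div_le_div_of_nonneg_left hτ.le hns_pos hns_le |>.trans
    apply le_of_eq
    rfl
  · intro hσ
    have h1 : Qprop τ' := QS τ' hτ'pos hσ
    have h2 := (Qint τ' k).mp h1
    rwa [show τ' + (k : ℂ) = τ from by rw [hτ']; ring] at h2

lemma Qstep (τ : ℂ) (hτ : 0 < τ.im) (h14 : 1/4 ≤ τ.im) : Qprop τ := by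
  by_cases hb : 4/5 ≤ τ.im
  · exact Qbase τ hτ hb
  push_neg at hb
  obtain ⟨σ, hσpos, hσge, hQ⟩ := Qreduce τ hτ hb
  apply hQ
  apply Qbase σ hσpos
  refine le_trans ?_ hσge
  rw [le_div_iff₀ (by nlinarith)]
  nlinarith [sq_nonneg (τ.im - 1), sq_nonneg (4*τ.im - 1)]

lemma Qmain (N : ℕ) : ∀ τ : ℂ, 0 < τ.im → 1/4 ≤ 3 ^ N * τ.im → Qprop τ := by
  induction N with
  | zero =>
    intro τ hτ hN
    rw [pow_zero, one_mul] at hN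
    exact Qstep τ hτ hN
  | succ M ih =>
    intro τ hτ hN
    by_cases h14 : 1/4 ≤ τ.im
    · exact Qstep τ hτ h14
    push_neg at h14
    have hlt : τ.im < 4/5 := by linarith
    obtain ⟨σ, hσpos, hσge, hQ⟩ := Qreduce τ hτ hlt
    apply hQ
    apply ih σ hσpos
    have h3 : 3 * τ.im ≤ τ.im / (1/4 + τ.im^2) := by
      rw [le_div_iff₀ (by nlinarith)]
      nlinarith
    have h4 : 3 * τ.im ≤ σ.im := h3.trans hσge
    calc (1:ℝ)/4 ≤ 3 ^ (M + 1) * τ.im := hN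
      _ = 3 ^ M * (3 * τ.im) := by ring
      _ ≤ 3 ^ M * σ.im := by
          apply mul_le_mul_of_nonneg_left h4 (by positivity)

lemma Qall (τ : ℂ) (hτ : 0 < τ.im) : Qprop τ := by
  obtain ⟨N, hN⟩ := pow_unbounded_of_one_lt (1/(4 * τ.im)) (by norm_num : (1:ℝ) < 3)
  apply Qmain N τ hτ
  rw [div_lt_iff₀ (by positivity)] at hN
  nlinarith [pow_pos (by norm_num : (0:ℝ) < 3) N]

end ThetaZeros



section ThetaFinal
open Complex
lemma theta_eq (τ z : ℂ) : theta τ z = jacobiTheta₂ (z + (1 - τ)/2) τ := by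
  unfold theta jacobiTheta₂
  refine tsum_congr fun m => ?_
  rw [jacobiTheta₂_term]
  have h1 : ((-1 : ℂ)) ^ m = cexp ((Real.pi : ℂ) * Complex.I * m) := by
    rw [show ((Real.pi : ℂ) * Complex.I * m) = (m : ℂ) * ((Real.pi : ℂ) * Complex.I) by ring,
      Complex.exp_int_mul, Complex.exp_pi_mul_I]
  rw [h1, ← Complex.exp_add, ← Complex.exp_add]
  congr 1
  ring

lemma theta_hasDerivAt (τ z : ℂ) (hτ : 0 < τ.im) :
    HasDerivAt (theta τ) (jacobiTheta₂' (z + (1 - τ)/2) τ) z := by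
  have h := hasDerivAt_jacobiTheta₂_fst (z + (1 - τ)/2) hτ
  have h2 : HasDerivAt (fun w : ℂ => w + (1 - τ)/2) 1 z := (hasDerivAt_id z).add_const _
  have h3 := HasDerivAt.comp z h h2
  rw [mul_one] at h3
  have : theta τ = fun w => jacobiTheta₂ (w + (1 - τ)/2) τ := funext fun w => theta_eq τ w
  rw [this]
  exact h3


end ThetaFinal

/-- The zero set of θ is exactly Λ = ℤ + ℤτ, and all zeroes are simple. -/
theorem stmt_7 (τ : ℂ) (hτ : 0 < τ.im) :
    {z : ℂ | theta τ z = 0} = {z : ℂ | ∃ m n : ℤ, z = (m : ℂ) + (n : ℂ) * τ} ∧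
    ∀ z : ℂ, theta τ z = 0 → deriv (theta τ) z ≠ 0 := by
  obtain ⟨hQ1, hQ2⟩ := Qall τ hτ
  constructor
  · ext z
    simp only [Set.mem_setOf_eq]
    rw [theta_eq, hQ1 (z + (1 - τ)/2)]
    constructor
    · rintro ⟨m, n, hz⟩
      exact ⟨m, n + 1, by push_cast; linear_combination hz⟩
    · rintro ⟨m, n, hz⟩
      exact ⟨m, n - 1, by push_cast; linear_combination hz⟩
  · intro z hz
    rw [(theta_hasDerivAt τ z hτ).deriv]
    rw [theta_eq] at hz
    exact hQ2 _ hz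
end

section
/- Let Λ = Z + Zτ (Im τ > 0), let h ∈ C with nh ∉ Λ for all nonzero integers n, and let φ(f)(z) = f(z+h) act on the field K = ∪_k M_{kΛ} of all elliptic functions for sub-lattices of Λ. If the Riccati equation (φ(u)+a)u = −b (with a ∈ M_Λ, b ∈ M_Λ^×) has a unique solution u in K, then u ∈ M_Λ; if it has exactly two solutions in K, then both lie in M_{2Λ}. -/
lemma merom_shift {f : ℂ → ℂ} (hf : MeromorphicOn f Set.univ) (ω : ℂ) :
    MeromorphicOn (fun z => f (z + ω)) Set.univ := by
  intro x _
  obtain ⟨n, hn⟩ := hf (x + ω) (Set.mem_univ _)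
  refine ⟨n, ?_⟩
  have ht : AnalyticAt ℂ (fun z : ℂ => z + ω) x := analyticAt_id.add analyticAt_const
  have hc := AnalyticAt.comp (f := fun z : ℂ => z + ω) (x := x) hn ht
  have he : ((fun w : ℂ => (w - (x + ω)) ^ n • f w) ∘ fun z : ℂ => z + ω)
      = fun z : ℂ => (z - x) ^ n • f (z + ω) := by
    funext z
    simp only [Function.comp]
    congr 2
    ring
  rwa [he] at hc

/-- Let Λ = ℤ + ℤτ, h non-torsion mod Λ, and φ the shift by h acting on
the field K = ∪_k M_{kΛ} of elliptic functions for sub-lattices of Λ. For the Riccati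
equation (φ(u)+a)u = −b with a ∈ M_Λ, b ∈ M_Λ^×: if it has a unique solution in K,
that solution lies in M_Λ; if it has exactly two solutions in K, both lie in M_{2Λ}. -/
theorem stmt_17 (τ h : ℂ) (hτ : 0 < τ.im)
    (hh : ∀ n : ℤ, n ≠ 0 → ¬ ∃ m k : ℤ, (n : ℂ) * h = (m : ℂ) + (k : ℂ) * τ)
    (a b : ℂ → ℂ)
    (ha : MeromorphicOn a Set.univ ∧ ∀ z : ℂ, a (z + 1) = a z ∧ a (z + τ) = a z)
    (hb : MeromorphicOn b Set.univ ∧ (∀ z : ℂ, b (z + 1) = b z ∧ b (z + τ) = b z) ∧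
      ∃ z : ℂ, b z ≠ 0)
    (InK : (ℂ → ℂ) → Prop)
    (hInK : ∀ u : ℂ → ℂ, InK u ↔ (MeromorphicOn u Set.univ ∧
      ∃ k : ℕ, 1 ≤ k ∧ ∀ z : ℂ, u (z + k) = u z ∧ u (z + k * τ) = u z))
    (Sol : (ℂ → ℂ) → Prop)
    (hSol : ∀ u : ℂ → ℂ, Sol u ↔ (InK u ∧ ∀ z : ℂ, (u (z + h) + a z) * u z = -(b z))) :
    ((∃! u : ℂ → ℂ, Sol u) →
      ∀ u : ℂ → ℂ, Sol u → ∀ z : ℂ, u (z + 1) = u z ∧ u (z + τ) = u z) ∧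
    (∀ u₁ u₂ : ℂ → ℂ, Sol u₁ → Sol u₂ → u₁ ≠ u₂ →
      (∀ u : ℂ → ℂ, Sol u → u = u₁ ∨ u = u₂) →
      ∀ z : ℂ, (u₁ (z + 2) = u₁ z ∧ u₁ (z + 2 * τ) = u₁ z) ∧
        (u₂ (z + 2) = u₂ z ∧ u₂ (z + 2 * τ) = u₂ z)) := by
  -- Key: shifting a solution by a common period ω of a and b gives another solution.
  have key : ∀ ω : ℂ, (∀ z, a (z + ω) = a z) → (∀ z, b (z + ω) = b z) →
      ∀ u : ℂ → ℂ, Sol u → Sol (fun z => u (z + ω)) := by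
    intro ω haω hbω u hu
    rw [hSol] at hu ⊢
    obtain ⟨hK, heq⟩ := hu
    rw [hInK] at hK
    obtain ⟨hm, k, hk1, hper⟩ := hK
    constructor
    · rw [hInK]
      refine ⟨merom_shift hm ω, k, hk1, fun z => ?_⟩
      constructor
      · have := (hper (z + ω)).1
        simpa [add_right_comm] using this
      · have := (hper (z + ω)).2
        simpa [add_right_comm] using this
    · intro z
      have hz := heq (z + ω)
      rw [haω, hbω] at hz
      rw [show z + h + ω = z + ω + h by ring]
      exact hz
  have t1 : ∀ u : ℂ → ℂ, Sol u → Sol (fun z => u (z + 1)) :=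
    key 1 (fun z => (ha.2 z).1) (fun z => (hb.2.1 z).1)
  have tτ : ∀ u : ℂ → ℂ, Sol u → Sol (fun z => u (z + τ)) :=
    key τ (fun z => (ha.2 z).2) (fun z => (hb.2.1 z).2)
  constructor
  · rintro ⟨w, hw, huniq⟩ u hu z
    have e1 : (fun z => u (z + 1)) = u := (huniq _ (t1 u hu)).trans (huniq u hu).symm
    have e2 : (fun z => u (z + τ)) = u := (huniq _ (tτ u hu)).trans (huniq u hu).symm
    exact ⟨congrFun e1 z, congrFun e2 z⟩
  · intro u₁ u₂ h1 h2 hne htwo z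
    have two : ∀ ω : ℂ, (∀ u : ℂ → ℂ, Sol u → Sol (fun z => u (z + ω))) →
        ∀ w : ℂ, u₁ (w + ω + ω) = u₁ w ∧ u₂ (w + ω + ω) = u₂ w := by
      intro ω T w
      rcases htwo _ (T u₁ h1) with e1 | e1 <;> rcases htwo _ (T u₂ h2) with e2 | e2
      · -- T u₁ = u₁ and T u₂ = u₁ : then u₁ = u₂, contradiction
        exfalso
        apply hne
        funext y
        have p1 : ∀ x, u₁ (x + ω) = u₁ x := fun x => congrFun e1 x
        have q : ∀ x, u₂ (x + ω) = u₁ x := fun x => congrFun e2 x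
        have hy : y - ω + ω = y := by ring
        calc u₁ y = u₁ (y - ω + ω) := by rw [hy]
          _ = u₁ (y - ω) := p1 _
          _ = u₂ (y - ω + ω) := (q _).symm
          _ = u₂ y := by rw [hy]
      · -- T u₁ = u₁ and T u₂ = u₂
        have p1 : ∀ x, u₁ (x + ω) = u₁ x := fun x => congrFun e1 x
        have p2 : ∀ x, u₂ (x + ω) = u₂ x := fun x => congrFun e2 x
        exact ⟨by rw [p1, p1], by rw [p2, p2]⟩
      · -- T u₁ = u₂ and T u₂ = u₁
        have q1 : ∀ x, u₁ (x + ω) = u₂ x := fun x => congrFun e1 x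
        have q2 : ∀ x, u₂ (x + ω) = u₁ x := fun x => congrFun e2 x
        exact ⟨by rw [q1, q2], by rw [q2, q1]⟩
      · -- T u₁ = u₂ and T u₂ = u₂ : then u₁ = u₂, contradiction
        exfalso
        apply hne
        funext y
        have q : ∀ x, u₁ (x + ω) = u₂ x := fun x => congrFun e1 x
        have p2 : ∀ x, u₂ (x + ω) = u₂ x := fun x => congrFun e2 x
        have hy : y - ω + ω = y := by ring
        calc u₁ y = u₁ (y - ω + ω) := by rw [hy]
          _ = u₂ (y - ω) := q _
          _ = u₂ (y - ω + ω) := (p2 _).symm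
          _ = u₂ y := by rw [hy]
    have H1 := two 1 t1 z
    have Hτ := two τ tτ z
    rw [show z + 1 + 1 = z + 2 by ring] at H1
    rw [show z + τ + τ = z + 2 * τ by ring] at Hτ
    exact ⟨⟨H1.1, Hτ.1⟩, ⟨H1.2, Hτ.2⟩⟩
end
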